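/- arXiv:2211.03379 — 6 statements merged into one kernel-verified Lean document; each statement's English description precedes it below -/
import Mathlib

section
/- If f : ℝ → ℂ is almost periodic (i.e., for every sequence {tₙ} ⊆ ℝ there is a subsequence {t_{n_k}} such that {f(t + t_{n_k})} converges uniformly in ℝ), then for every λ ∈ ℝ and a ∈ ℝ the limit lim_{T→∞} (1/T) ∫_a^{a+T} f(t) e^{-iλt} dt exists. -/
open Filter Complex

def AlmostPeriodic (f : ℝ → ℂ) : Prop :=
  ∀ t : ℕ → ℝ, ∃ φ : ℕ → ℕ, StrictMono φ ∧
    ∃ g : ℝ → ℂ, TendstoUniformly (fun k x => f (x + t (φ k))) g atTop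

lemma ap_bounded {f : ℝ → ℂ} (haf : AlmostPeriodic f) : ∃ C : ℝ, 0 ≤ C ∧ ∀ t, ‖f t‖ ≤ C := by
  by_contra hb
  push_neg at hb
  have hb' : ∀ n : ℕ, ∃ x : ℝ, (n : ℝ) < ‖f x‖ := by
    intro n
    obtain ⟨x, hx⟩ := hb n (Nat.cast_nonneg n)
    exact ⟨x, hx⟩
  choose t ht using hb'
  obtain ⟨φ, hφ, g, hu⟩ := haf t
  have h0 : Tendsto (fun k => f (0 + t (φ k))) atTop (nhds (g 0)) := hu.tendsto_at 0
  have hbd : ∃ N : ℕ, ∀ k ≥ N, ‖f (t (φ k))‖ ≤ ‖g 0‖ + 1 := by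
    have := (h0.norm.eventually (eventually_le_nhds (lt_add_one ‖g 0‖)))
    simpa [eventually_atTop] using this
  obtain ⟨N, hN⟩ := hbd
  obtain ⟨k, hk1, hk2⟩ : ∃ k : ℕ, N ≤ k ∧ (‖g 0‖ + 1 : ℝ) < k := by
    obtain ⟨m, hm⟩ := exists_nat_gt (‖g 0‖ + 1)
    exact ⟨max N m, le_max_left _ _, hm.trans_le (by exact_mod_cast le_max_right N m)⟩
  have h1 := hN k hk1
  have h2 := ht (φ k)
  have h3 : (k : ℝ) ≤ φ k := by exact_mod_cast hφ.id_le k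
  linarith

lemma list_le_fold (l : List ℝ) : ∀ x ∈ l, |x| ≤ l.foldr (fun a b => max |a| b) 0 := by
  induction l with
  | nil => intro x hx; simp at hx
  | cons a l ih =>
    intro x hx
    rcases List.mem_cons.1 hx with h | h
    · subst h; exact le_max_left _ _
    · exact (ih x h).trans (le_max_right _ _)

lemma fold_nonneg (l : List ℝ) : 0 ≤ l.foldr (fun a b => max |a| b) 0 := by
  induction l with
  | nil => simp
  | cons a l ih => exact ih.trans (le_max_right _ _)

lemma ap_bohr {h : ℝ → ℂ} (hap : AlmostPeriodic h) {ε : ℝ} (hε : 0 < ε) :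
    ∃ L > 0, ∀ x : ℝ, ∃ τ ∈ Set.Icc x (x + L), ∀ t, ‖h (t + τ) - h t‖ ≤ ε := by
  by_contra hc
  push_neg at hc
  -- hc : ∀ L > 0, ∃ x, ∀ τ ∈ Icc x (x+L), ∃ t, ε < ‖h (t+τ) - h t‖
  have hX : ∀ L : ℝ, 0 < L → ∃ x : ℝ, ∀ τ ∈ Set.Icc x (x + L), ∃ t, ε < ‖h (t + τ) - h t‖ := hc
  classical
  let X : ℝ → ℝ := fun L => if hL : 0 < L then (hX L hL).choose else 0
  have hXp : ∀ L : ℝ, 0 < L → ∀ τ ∈ Set.Icc (X L) (X L + L), ∃ t, ε < ‖h (t + τ) - h t‖ := by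
    intro L hL
    simpa only [X, dif_pos hL] using (hX L hL).choose_spec
  let next : List ℝ → ℝ := fun l =>
    X (2 * (l.foldr (fun a b => max |a| b) 0) + 2) + ((l.foldr (fun a b => max |a| b) 0) + 1)
  let ls : ℕ → List ℝ := fun n => Nat.rec [] (fun _ l => l ++ [next l]) n
  let s : ℕ → ℝ := fun n => next (ls n)
  have hls_succ : ∀ n, ls (n + 1) = ls n ++ [s n] := fun n => rfl
  have hmem : ∀ i j : ℕ, i < j → s i ∈ ls j := by
    intro i j hij
    induction j with
    | zero => omega
    | succ j ih =>
      rw [hls_succ]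
      rcases Nat.lt_succ_iff_lt_or_eq.1 hij with h' | h'
      · exact List.mem_append_left _ (ih h')
      · subst h'; exact List.mem_append_right _ (List.mem_singleton_self _)
  have key : ∀ i j : ℕ, i < j → ∃ t, ε < ‖h (t + (s j - s i)) - h t‖ := by
    intro i j hij
    set M := (ls j).foldr (fun a b => max |a| b) 0 with hM
    have hM0 : 0 ≤ M := fold_nonneg _
    have hLpos : 0 < 2 * M + 2 := by linarith
    have hsi : |s i| ≤ M := list_le_fold _ _ (hmem i j hij)
    have : s j - s i ∈ Set.Icc (X (2 * M + 2)) (X (2 * M + 2) + (2 * M + 2)) := by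
      have hsj : s j = X (2 * M + 2) + (M + 1) := rfl
      constructor
      · rw [hsj]; have := abs_le.1 hsi; linarith [this.2]
      · rw [hsj]; have := abs_le.1 hsi; linarith [this.1]
    exact hXp _ hLpos _ this
  obtain ⟨φ, hφ, g, hu⟩ := hap s
  have hε2 : 0 < ε / 2 := by linarith
  obtain ⟨N, hN⟩ := (Metric.tendstoUniformly_iff.1 hu (ε / 2) hε2).exists_forall_of_atTop
  obtain ⟨t, ht⟩ := key (φ N) (φ (N + 1)) (hφ (Nat.lt_succ_self N))
  set x := t - s (φ N) with hx
  have e1 : t + (s (φ (N + 1)) - s (φ N)) = x + s (φ (N + 1)) := by ring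
  have e2 : t = x + s (φ N) := by ring
  rw [e1, e2] at ht
  have d1 := hN N (le_refl N) x
  have d2 := hN (N + 1) (Nat.le_succ N) x
  have : ‖h (x + s (φ (N + 1))) - h (x + s (φ N))‖ ≤
      dist (h (x + s (φ (N + 1)))) (g x) + dist (g x) (h (x + s (φ N))) := by
    rw [← dist_eq_norm]
    exact dist_triangle _ _ _
  rw [dist_comm] at d2
  linarith [this, d1, d2]

lemma norm_char (lam t : ℝ) : ‖Complex.exp (-(Complex.I * (lam : ℂ) * (t : ℂ)))‖ = 1 := by
  rw [Complex.norm_exp]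
  simp [Complex.exp_re]

lemma ap_char {f : ℝ → ℂ} (haf : AlmostPeriodic f) (lam : ℝ) :
    AlmostPeriodic (fun t => f t * Complex.exp (-(Complex.I * (lam : ℂ) * (t : ℂ)))) := by
  obtain ⟨C, hC0, hC⟩ := ap_bounded haf
  intro t
  obtain ⟨φ₁, hφ₁, g, hu⟩ := haf t
  have hgC : ∀ x, ‖g x‖ ≤ C := by
    intro x
    have := (hu.tendsto_at x).norm
    exact le_of_tendsto this (Eventually.of_forall fun k => hC _)
  have hball : ∀ k, Complex.exp (-(Complex.I * (lam : ℂ) * (t (φ₁ k) : ℂ))) ∈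
      Metric.closedBall (0 : ℂ) 1 := by
    intro k
    have := norm_char lam (t (φ₁ k))
    simp [Metric.mem_closedBall, dist_zero_right, this]
  obtain ⟨c, _, ψ, hψ, hcψ⟩ := (isCompact_closedBall (0:ℂ) 1).tendsto_subseq hball
  refine ⟨φ₁ ∘ ψ, hφ₁.comp hψ, fun x => g x * c * Complex.exp (-(Complex.I * (lam : ℂ) * (x : ℂ))), ?_⟩
  rw [Metric.tendstoUniformly_iff]
  intro ε hε
  have hC1 : 0 < C + 1 := by linarith
  have hε1 : 0 < ε / (2 * (C + 1)) := by positivity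
  have h1 : ∀ᶠ k in atTop, ∀ x : ℝ, dist (g x) (f (x + t (φ₁ (ψ k)))) < ε / (2 * (C + 1)) := by
    have := Metric.tendstoUniformly_iff.1 hu _ hε1
    exact hψ.tendsto_atTop.eventually this
  have h2 : ∀ᶠ k in atTop,
      dist (Complex.exp (-(Complex.I * (lam : ℂ) * (t (φ₁ (ψ k)) : ℂ)))) c < ε / (2 * (C + 1)) := by
    exact (Metric.tendsto_nhds.1 hcψ) _ hε1
  filter_upwards [h1, h2] with k hk1 hk2
  intro x
  set ck := Complex.exp (-(Complex.I * (lam : ℂ) * (t (φ₁ (ψ k)) : ℂ)))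
  set ex := Complex.exp (-(Complex.I * (lam : ℂ) * (x : ℂ)))
  have hsplit : f (x + t (φ₁ (ψ k))) * Complex.exp (-(Complex.I * (lam : ℂ) * ((x + t (φ₁ (ψ k))) : ℂ)))
      = f (x + t (φ₁ (ψ k))) * ck * ex := by
    simp only [ck, ex, mul_assoc, ← Complex.exp_add]
    congr 2
    push_cast
    ring
  rw [dist_eq_norm]
  simp only [Function.comp]
  push_cast
  calc ‖g x * c * ex - f (x + t (φ₁ (ψ k))) * Complex.exp (-(Complex.I * (lam : ℂ) * ((x + t (φ₁ (ψ k))) : ℂ)))‖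
      = ‖(g x * c - f (x + t (φ₁ (ψ k))) * ck) * ex‖ := by rw [hsplit, ← sub_mul]
    _ = ‖g x * c - f (x + t (φ₁ (ψ k))) * ck‖ := by
        rw [norm_mul, show ‖ex‖ = 1 from norm_char lam x, mul_one]
    _ ≤ ‖g x * c - g x * ck‖ + ‖g x * ck - f (x + t (φ₁ (ψ k))) * ck‖ := by
        have := norm_sub_le_norm_sub_add_norm_sub (g x * c) (g x * ck) (f (x + t (φ₁ (ψ k))) * ck)
        exact this
    _ ≤ ‖g x‖ * ‖c - ck‖ + ‖g x - f (x + t (φ₁ (ψ k)))‖ * ‖ck‖ := by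
        rw [← mul_sub, ← sub_mul, norm_mul, norm_mul]
    _ < ε := by
        have hck : ‖ck‖ = 1 := norm_char _ _
        rw [hck, mul_one]
        have e1 : ‖c - ck‖ < ε / (2 * (C + 1)) := by
          rw [← dist_eq_norm, dist_comm]; exact hk2
        have e2 : ‖g x - f (x + t (φ₁ (ψ k)))‖ < ε / (2 * (C + 1)) := by
          rw [← dist_eq_norm]; exact hk1 x
        have hg := hgC x
        have hgn : 0 ≤ ‖g x‖ := norm_nonneg _
        calc ‖g x‖ * ‖c - ck‖ + ‖g x - f (x + t (φ₁ (ψ k)))‖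
            ≤ (C + 1) * ‖c - ck‖ + ‖g x - f (x + t (φ₁ (ψ k)))‖ := by
              have : ‖g x‖ ≤ C + 1 := by linarith
              nlinarith [norm_nonneg (c - ck)]
          _ < (C + 1) * (ε / (2 * (C + 1))) + ε / (2 * (C + 1)) := by
              have := mul_lt_mul_of_pos_left e1 hC1
              linarith
          _ ≤ ε := by
              rw [mul_div_assoc']
              rw [← add_div]
              rw [div_le_iff₀ (by positivity)]
              ring_nf
              nlinarith

open MeasureTheory in

lemma mean_exists {h : ℝ → ℂ} (hcont : Continuous h) {C : ℝ} (hC0 : 0 ≤ C) (hC : ∀ t, ‖h t‖ ≤ C)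
    (bohr : ∀ ε : ℝ, 0 < ε → ∃ L > 0, ∀ x : ℝ, ∃ τ ∈ Set.Icc x (x + L),
      ∀ t, ‖h (t + τ) - h t‖ ≤ ε)
    (a : ℝ) :
    ∃ Lv : ℂ, Tendsto (fun T : ℝ => (T : ℂ)⁻¹ * ∫ t in a..(a + T), h t) atTop (nhds Lv) := by
  have intgr : ∀ p q : ℝ, IntervalIntegrable h volume p q := fun p q =>
    hcont.intervalIntegrable p q
  have nb : ∀ p q : ℝ, ‖∫ t in p..q, h t‖ ≤ C * |q - p| :=
    fun p q => intervalIntegral.norm_integral_le_of_norm_le_const (fun x _ => hC x)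
  set A : ℝ → ℂ := fun T => (T : ℂ)⁻¹ * ∫ t in a..(a + T), h t with hA
  -- the key uniform Cauchy-type estimate
  have main : ∀ ε : ℝ, 0 < ε → ∃ T₀ : ℝ, 0 < T₀ ∧ ∀ T S : ℝ, T₀ ≤ T → T₀ ≤ S →
      ‖A T - A S‖ ≤ ε := by
    intro ε hε
    have hε8 : 0 < ε / 8 := by linarith
    obtain ⟨L, hL, hbohr⟩ := bohr (ε / 8) hε8
    -- shift estimate
    have shift : ∀ b T : ℝ, 0 ≤ T →
        ‖(∫ t in b..(b + T), h t) - ∫ t in a..(a + T), h t‖ ≤ ε / 8 * T + 2 * L * C := by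
      intro b T hT
      obtain ⟨τ, hτmem, hper⟩ := hbohr (b - a)
      set c := a + τ with hc
      have hcb : b ≤ c ∧ c ≤ b + L := by
        constructor
        · have := hτmem.1; simp only [hc]; linarith
        · have := hτmem.2; simp only [hc]; linarith
      have step1 : (∫ t in c..(c + T), h t) = ∫ t in a..(a + T), h (t + τ) := by
        rw [intervalIntegral.integral_comp_add_right]
        congr 1 <;> simp [hc] <;> ring
      have intgr2 : IntervalIntegrable (fun t => h (t + τ)) volume a (a + T) :=
        (hcont.comp (continuous_id.add continuous_const)).intervalIntegrable a (a + T)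
      have step2 : ‖(∫ t in c..(c + T), h t) - ∫ t in a..(a + T), h t‖ ≤ ε / 8 * T := by
        rw [step1, ← intervalIntegral.integral_sub intgr2 (intgr a (a + T))]
        calc ‖∫ t in a..(a + T), (h (t + τ) - h t)‖ ≤ ε / 8 * |a + T - a| := by
              simpa using intervalIntegral.norm_integral_le_of_norm_le_const
                (a := a) (b := a + T) (C := ε / 8)
                (f := fun t => h (t + τ) - h t)
                (fun x _ => hper x)
          _ = ε / 8 * T := by rw [add_sub_cancel_left, _root_.abs_of_nonneg hT]
      have split1 : (∫ t in b..(b + T), h t) = (∫ t in b..c, h t) + ∫ t in c..(b + T), h t :=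
        (intervalIntegral.integral_add_adjacent_intervals (intgr b c) (intgr c (b + T))).symm
      have split2 : (∫ t in c..(c + T), h t) = (∫ t in c..(b + T), h t) + ∫ t in (b + T)..(c + T), h t :=
        (intervalIntegral.integral_add_adjacent_intervals (intgr c (b + T)) (intgr (b + T) (c + T))).symm
      have diff : (∫ t in b..(b + T), h t) - (∫ t in c..(c + T), h t)
          = (∫ t in b..c, h t) - ∫ t in (b + T)..(c + T), h t := by
        rw [split1, split2]; ring
      have n1 : ‖∫ t in b..c, h t‖ ≤ C * L := by
        refine (nb b c).trans ?_
        have : |c - b| ≤ L := by rw [_root_.abs_of_nonneg (by linarith [hcb.1])]; linarith [hcb.2]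
        exact mul_le_mul_of_nonneg_left this hC0
      have n2 : ‖∫ t in (b + T)..(c + T), h t‖ ≤ C * L := by
        refine (nb _ _).trans ?_
        have : |c + T - (b + T)| ≤ L := by
          rw [show c + T - (b + T) = c - b by ring, _root_.abs_of_nonneg (by linarith [hcb.1])]
          linarith [hcb.2]
        exact mul_le_mul_of_nonneg_left this hC0
      calc ‖(∫ t in b..(b + T), h t) - ∫ t in a..(a + T), h t‖
          ≤ ‖(∫ t in b..(b + T), h t) - ∫ t in c..(c + T), h t‖
            + ‖(∫ t in c..(c + T), h t) - ∫ t in a..(a + T), h t‖ :=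
            norm_sub_le_norm_sub_add_norm_sub _ _ _
        _ ≤ (C * L + C * L) + ε / 8 * T := by
            rw [diff]
            have := norm_sub_le (∫ t in b..c, h t) (∫ t in (b + T)..(c + T), h t)
            have hsum := add_le_add (this.trans (add_le_add n1 n2)) step2
            linarith
        _ = ε / 8 * T + 2 * L * C := by ring
    -- blocks estimate
    have blocks : ∀ (T : ℝ), 0 ≤ T → ∀ n : ℕ,
        ‖(∫ t in a..(a + n * T), h t) - (n : ℂ) * ∫ t in a..(a + T), h t‖
          ≤ n * (ε / 8 * T + 2 * L * C) := by
      intro T hT n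
      induction n with
      | zero => simp
      | succ n ih =>
        have hsplit : (∫ t in a..(a + (n + 1 : ℕ) * T), h t)
            = (∫ t in a..(a + n * T), h t) + ∫ t in (a + n * T)..((a + n * T) + T), h t := by
          rw [intervalIntegral.integral_add_adjacent_intervals (intgr a (a + n * T))
            (intgr (a + n * T) ((a + n * T) + T))]
          congr 1
          push_cast; ring
        have hstep := shift (a + n * T) T hT
        calc ‖(∫ t in a..(a + (n + 1 : ℕ) * T), h t) - ((n + 1 : ℕ) : ℂ) * ∫ t in a..(a + T), h t‖
            = ‖((∫ t in a..(a + n * T), h t) - (n : ℂ) * ∫ t in a..(a + T), h t)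
              + ((∫ t in (a + n * T)..((a + n * T) + T), h t) - ∫ t in a..(a + T), h t)‖ := by
              rw [hsplit]; push_cast; ring_nf
          _ ≤ ‖(∫ t in a..(a + n * T), h t) - (n : ℂ) * ∫ t in a..(a + T), h t‖
              + ‖(∫ t in (a + n * T)..((a + n * T) + T), h t) - ∫ t in a..(a + T), h t‖ :=
              norm_add_le _ _
          _ ≤ n * (ε / 8 * T + 2 * L * C) + (ε / 8 * T + 2 * L * C) := add_le_add ih hstep
          _ = (n + 1 : ℕ) * (ε / 8 * T + 2 * L * C) := by push_cast; ring
    -- A(nT) vs A(T)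
    have multiples : ∀ (T : ℝ), 0 < T → ∀ n : ℕ, 1 ≤ n →
        ‖A (n * T) - A T‖ ≤ ε / 8 + 2 * L * C / T := by
      intro T hT n hn
      have hnR : (0 : ℝ) < n := by exact_mod_cast hn
      have hnT : (0 : ℝ) < n * T := mul_pos hnR hT
      have hfact : A (n * T) - A T
          = ((n * T : ℝ) : ℂ)⁻¹ * ((∫ t in a..(a + n * T), h t) - (n : ℂ) * ∫ t in a..(a + T), h t) := by
        simp only [hA]
        have hTne : (T : ℂ) ≠ 0 := by exact_mod_cast hT.ne'
        have hnne : ((n : ℝ) : ℂ) ≠ 0 := by exact_mod_cast hnR.ne'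
        have : ((n * T : ℝ) : ℂ) = (n : ℂ) * (T : ℂ) := by push_cast; ring
        rw [this, mul_inv, mul_sub]
        rw [show ((n : ℝ) : ℂ) = (n : ℂ) from by push_cast; ring] at hnne
        field_simp
      rw [hfact, norm_mul]
      have hinv : ‖((n * T : ℝ) : ℂ)⁻¹‖ = (n * T)⁻¹ := by
        rw [norm_inv, Complex.norm_real, Real.norm_of_nonneg hnT.le]
      rw [hinv]
      have hb := blocks T hT.le n
      calc ((n : ℝ) * T)⁻¹ * ‖(∫ t in a..(a + n * T), h t) - (n : ℂ) * ∫ t in a..(a + T), h t‖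
          ≤ ((n : ℝ) * T)⁻¹ * (n * (ε / 8 * T + 2 * L * C)) := by
            exact mul_le_mul_of_nonneg_left hb (inv_nonneg.2 hnT.le)
        _ = ε / 8 + 2 * L * C / T := by
            field_simp
    -- comparison of nearby averages
    have nearby : ∀ R R' : ℝ, 0 < R → R ≤ R' → ‖A R' - A R‖ ≤ 2 * C * (R' - R) / R' := by
      intro R R' hR hRR
      have hR' : 0 < R' := lt_of_lt_of_le hR hRR
      have hsplit : (∫ t in a..(a + R'), h t)
          = (∫ t in a..(a + R), h t) + ∫ t in (a + R)..(a + R'), h t :=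
        (intervalIntegral.integral_add_adjacent_intervals (intgr a (a + R))
          (intgr (a + R) (a + R'))).symm
      have hfact : A R' - A R
          = (((R' : ℝ) : ℂ)⁻¹ - ((R : ℝ) : ℂ)⁻¹) * (∫ t in a..(a + R), h t)
            + ((R' : ℝ) : ℂ)⁻¹ * ∫ t in (a + R)..(a + R'), h t := by
        simp only [hA, hsplit]
        ring
      rw [hfact]
      have hiv : ‖(((R' : ℝ) : ℂ)⁻¹ - ((R : ℝ) : ℂ)⁻¹)‖ = R⁻¹ - R'⁻¹ := by
        rw [show (((R' : ℝ) : ℂ)⁻¹ - ((R : ℝ) : ℂ)⁻¹) = (((R'⁻¹ - R⁻¹ : ℝ)) : ℂ) from by push_cast; ring,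
          Complex.norm_real, Real.norm_eq_abs, abs_sub_comm, _root_.abs_of_nonneg]
        have := inv_anti₀ hR hRR
        linarith
      have n1 : ‖∫ t in a..(a + R), h t‖ ≤ C * R := by
        have := nb a (a + R)
        rwa [add_sub_cancel_left, _root_.abs_of_nonneg hR.le] at this
      have n2 : ‖∫ t in (a + R)..(a + R'), h t‖ ≤ C * (R' - R) := by
        have := nb (a + R) (a + R')
        rwa [show a + R' - (a + R) = R' - R by ring, _root_.abs_of_nonneg (by linarith)] at this
      calc ‖(((R' : ℝ) : ℂ)⁻¹ - ((R : ℝ) : ℂ)⁻¹) * (∫ t in a..(a + R), h t)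
            + ((R' : ℝ) : ℂ)⁻¹ * ∫ t in (a + R)..(a + R'), h t‖
          ≤ ‖(((R' : ℝ) : ℂ)⁻¹ - ((R : ℝ) : ℂ)⁻¹)‖ * ‖∫ t in a..(a + R), h t‖
            + ‖((R' : ℝ) : ℂ)⁻¹‖ * ‖∫ t in (a + R)..(a + R'), h t‖ := by
            refine (norm_add_le _ _).trans ?_
            rw [norm_mul, norm_mul]
        _ ≤ (R⁻¹ - R'⁻¹) * (C * R) + R'⁻¹ * (C * (R' - R)) := by
            rw [hiv]
            have hiv2 : ‖((R' : ℝ) : ℂ)⁻¹‖ = R'⁻¹ := by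
              rw [norm_inv, Complex.norm_real, Real.norm_of_nonneg hR'.le]
            rw [hiv2]
            have h1 : 0 ≤ R⁻¹ - R'⁻¹ := by
              have := inv_anti₀ hR hRR; linarith
            exact add_le_add (mul_le_mul_of_nonneg_left n1 h1)
              (mul_le_mul_of_nonneg_left n2 (inv_nonneg.2 hR'.le))
        _ = 2 * C * (R' - R) / R' := by
            field_simp
            ring
    -- final estimate for arbitrary T, S ≥ T₀
    refine ⟨max 1 (32 * L * C / ε + 1), lt_of_lt_of_le one_pos (le_max_left _ _), ?_⟩
    intro T S hT hS
    have hT1 : (1 : ℝ) ≤ T := le_trans (le_max_left _ _) hT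
    have hS1 : (1 : ℝ) ≤ S := le_trans (le_max_left _ _) hS
    have hT0 : 0 < T := lt_of_lt_of_le one_pos hT1
    have hS0 : 0 < S := lt_of_lt_of_le one_pos hS1
    have hTL : 2 * L * C / T ≤ ε / 16 := by
      have h2 : 32 * L * C / ε + 1 ≤ T := le_trans (le_max_right _ _) hT
      rw [div_le_iff₀ hT0]
      have : 32 * L * C / ε ≤ T - 1 := by linarith
      have h3 : 32 * L * C ≤ ε * (T - 1) := by
        rw [div_le_iff₀ hε] at this; linarith
      nlinarith
    have hSL : 2 * L * C / S ≤ ε / 16 := by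
      have h2 : 32 * L * C / ε + 1 ≤ S := le_trans (le_max_right _ _) hS
      rw [div_le_iff₀ hS0]
      have : 32 * L * C / ε ≤ S - 1 := by linarith
      have h3 : 32 * L * C ≤ ε * (S - 1) := by
        rw [div_le_iff₀ hε] at this; linarith
      nlinarith
    -- for every δ > 0 : ‖A T - A S‖ ≤ ε/8 + ε/16 + ε/8 + ε/16 + δ
    have hδ : ∀ δ : ℝ, 0 < δ → ‖A T - A S‖ ≤ ε / 4 + ε / 8 + δ := by
      intro δ hδ0
      obtain ⟨n, hn⟩ := exists_nat_gt (max 1 (2 * C * S / (δ * T)))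
      have hn1 : 1 ≤ n := by
        have := lt_of_le_of_lt (le_max_left 1 _) hn
        exact_mod_cast this.le
      have hnR : (0 : ℝ) < n := by exact_mod_cast hn1
      set m : ℕ := ⌈(n : ℝ) * T / S⌉₊ with hm
      have hmTS : (n : ℝ) * T ≤ m * S := by
        rw [← div_le_iff₀ hS0]
        exact Nat.le_ceil _
      have hm1 : 1 ≤ m := by
        by_contra hm0
        push_neg at hm0
        interval_cases m
        · simp at hmTS; nlinarith
      have hmub : (m : ℝ) * S ≤ n * T + S := by
        have : (m : ℝ) < n * T / S + 1 := by
          exact_mod_cast Nat.ceil_lt_add_one (by positivity)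
        have h2 : (m : ℝ) * S ≤ (n * T / S + 1) * S := by nlinarith
        calc (m : ℝ) * S ≤ (n * T / S + 1) * S := h2
          _ = n * T + S := by field_simp
      have hnT0 : 0 < (n : ℝ) * T := mul_pos hnR hT0
      have hmid : ‖A ((m : ℝ) * S) - A ((n : ℝ) * T)‖ ≤ δ := by
        have hnear := nearby ((n : ℝ) * T) ((m : ℝ) * S) hnT0 hmTS
        refine hnear.trans ?_
        have hms0 : (0 : ℝ) < m * S := lt_of_lt_of_le hnT0 hmTS
        rw [div_le_iff₀ hms0]
        have hd : (m : ℝ) * S - n * T ≤ S := by linarith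
        have hδT : 2 * C * S ≤ δ * ((n : ℝ) * T) := by
          have h4 : 2 * C * S / (δ * T) ≤ (n : ℝ) :=
            (lt_of_le_of_lt (le_max_right 1 (2 * C * S / (δ * T))) hn).le
          rw [div_le_iff₀ (by positivity)] at h4
          calc 2 * C * S ≤ (n : ℝ) * (δ * T) := h4
            _ = δ * ((n : ℝ) * T) := by ring
        have c1 : 2 * C * ((m : ℝ) * S - (n : ℝ) * T) ≤ 2 * C * S :=
          mul_le_mul_of_nonneg_left hd (by linarith)
        have c2 : δ * ((n : ℝ) * T) ≤ δ * ((m : ℝ) * S) :=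
          mul_le_mul_of_nonneg_left hmTS hδ0.le
        linarith
      have h1 := multiples T hT0 n hn1
      have h2 := multiples S hS0 m hm1
      calc ‖A T - A S‖
          ≤ ‖A T - A ((n : ℝ) * T)‖ + ‖A ((n : ℝ) * T) - A ((m : ℝ) * S)‖
            + ‖A ((m : ℝ) * S) - A S‖ := by
            have := dist_triangle4 (A T) (A ((n : ℝ) * T)) (A ((m : ℝ) * S)) (A S)
            simpa [dist_eq_norm] using this
        _ ≤ (ε / 8 + 2 * L * C / T) + δ + (ε / 8 + 2 * L * C / S) := by
            refine add_le_add (add_le_add ?_ ?_) ?_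
            · rw [norm_sub_rev]; exact h1
            · rw [norm_sub_rev]; exact hmid
            · exact h2
        _ ≤ ε / 4 + ε / 8 + δ := by linarith
    -- conclude
    have hfinal : ‖A T - A S‖ ≤ ε / 4 + ε / 8 := by
      by_contra hcon
      push_neg at hcon
      have := hδ ((‖A T - A S‖ - (ε / 4 + ε / 8)) / 2) (by linarith)
      linarith
    linarith
  -- Cauchy ⇒ convergence
  have hcauchy : Cauchy (map A atTop) := by
    rw [Metric.cauchy_iff]
    refine ⟨map_neBot, ?_⟩
    intro ε hε
    obtain ⟨T₀, hT₀, hmain⟩ := main (ε / 2) (by linarith)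
    refine ⟨A '' Set.Ici T₀, image_mem_map (Ici_mem_atTop T₀), ?_⟩
    rintro x ⟨T, hT, rfl⟩ y ⟨S, hS, rfl⟩
    rw [dist_eq_norm]
    exact lt_of_le_of_lt (hmain T S hT hS) (by linarith)
  obtain ⟨Lv, hLv⟩ := cauchy_map_iff_exists_tendsto.1 hcauchy
  exact ⟨Lv, hLv⟩

/-- If `f` is almost periodic, then for every `λ, a ∈ ℝ` the mean value
`lim_{T→∞} (1/T) ∫_a^{a+T} f(t) e^{-iλt} dt` exists. -/
theorem stmt_0 (f : ℝ → ℂ) (hf : Continuous f) (haf : AlmostPeriodic f) (lam a : ℝ) :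
    ∃ L : ℂ, Tendsto
      (fun T : ℝ => (T : ℂ)⁻¹ *
        ∫ t in a..(a + T), f t * Complex.exp (-(Complex.I * (lam : ℂ) * (t : ℂ))))
      atTop (nhds L) := by
  set h : ℝ → ℂ := fun t => f t * Complex.exp (-(Complex.I * (lam : ℂ) * (t : ℂ))) with hh
  have hcont : Continuous h :=
    hf.mul (Complex.continuous_exp.comp ((continuous_const.mul Complex.continuous_ofReal).neg))
  have hap : AlmostPeriodic h := ap_char haf lam
  obtain ⟨C, hC0, hC⟩ := ap_bounded hap
  exact mean_exists hcont hC0 hC (fun ε hε => ap_bohr hap hε) a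
end

section
/- A function f : ℝ → ℂ is almost periodic (every sequence of translates has a uniformly convergent subsequence) if and only if for all ε > 0 there exists l > 0 such that every interval (x, x+l) contains a number τ with |f(t+τ) − f(t)| < ε for all t ∈ ℝ. -/
/-!
If the `ε`-translation numbers of `f` meet every interval of length `l`, then every translate
`f (· + a)` lies uniformly within `ε` of a translate `f (· + b)` with `b ∈ [0, l]`. These form
a compact family of bounded continuous functions (`s ↦ f (· + s)` is continuous in the sup norm
because `f` is uniformly continuous), so the set of all translates is totally bounded, hence
relatively compact in the complete space `ℝ →ᵇ E`, and every sequence of translates has a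
uniformly convergent subsequence.

Conversely, if the non-translation numbers contain arbitrarily long intervals, one chooses `t n`
inductively so that every difference `t n - t m` with `m < n` is a non-translation number; then
no subsequence of the translates `f (· + t n)` is uniformly Cauchy.
-/

open Filter

section Bohr

variable {E : Type*} [NormedAddCommGroup E]

open scoped BoundedContinuousFunction

def IsTranslationNumber (f : ℝ → E) (ε τ : ℝ) : Prop :=
  ∀ t, ‖f (t + τ) - f t‖ < ε

def BohrAlmostPeriodic (f : ℝ → E) : Prop :=
  ∀ ε > (0 : ℝ), ∃ l > (0 : ℝ), ∀ x : ℝ,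
    ∃ τ ∈ Set.Ioo x (x + l), IsTranslationNumber f ε τ

namespace BohrAlmostPeriodic

variable {f : ℝ → E}

theorem exists_isTranslationNumber_add_mem_Icc (h : BohrAlmostPeriodic f) {ε : ℝ}
    (hε : 0 < ε) :
    ∃ l > (0 : ℝ), ∀ a, ∃ τ, a + τ ∈ Set.Icc 0 l ∧ IsTranslationNumber f ε τ := by
  obtain ⟨l, hl, hτ⟩ := h ε hε
  refine ⟨l, hl, fun a => ?_⟩
  obtain ⟨τ, ⟨h₁, h₂⟩, hτ⟩ := hτ (-a)
  exact ⟨τ, ⟨by linarith, by linarith⟩, hτ⟩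

theorem exists_norm_le (h : BohrAlmostPeriodic f) (hf : Continuous f) :
    ∃ C, ∀ t, ‖f t‖ ≤ C := by
  obtain ⟨l, -, hl⟩ := h.exists_isTranslationNumber_add_mem_Icc one_pos
  obtain ⟨C, hC⟩ :=
    isCompact_Icc.exists_bound_of_continuousOn (s := Set.Icc 0 l) hf.continuousOn
  refine ⟨C + 1, fun t => ?_⟩
  obtain ⟨τ, hmem, hτ⟩ := hl t
  calc ‖f t‖ ≤ ‖f (t + τ)‖ + ‖f (t + τ) - f t‖ := norm_le_norm_add_norm_sub _ _
    _ ≤ C + 1 := add_le_add (hC _ hmem) (hτ t).le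

theorem uniformContinuous (h : BohrAlmostPeriodic f) (hf : Continuous f) :
    UniformContinuous f := by
  rw [Metric.uniformContinuous_iff]
  intro ε hε
  obtain ⟨l, -, hl⟩ := h.exists_isTranslationNumber_add_mem_Icc (ε := ε / 3) (by positivity)
  -- a common translation moves any two close points into `[-1, l + 1]`
  obtain ⟨δ, hδ, hδf⟩ := Metric.uniformContinuousOn_iff.mp
    ((isCompact_Icc (a := -1) (b := l + 1)).uniformContinuousOn_of_continuous hf.continuousOn)
    (ε / 3) (by positivity)
  refine ⟨min δ 1, by positivity, fun {a b} hab => ?_⟩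
  obtain ⟨τ, ⟨h₀, hₗ⟩, hτ⟩ := hl a
  rw [Real.dist_eq, lt_min_iff, abs_lt, abs_lt] at hab
  have hshift : dist (f (a + τ)) (f (b + τ)) < ε / 3 :=
    hδf _ ⟨by linarith, by linarith⟩ _ ⟨by linarith, by linarith⟩
      (by rw [Real.dist_eq, abs_lt]; constructor <;> linarith)
  calc dist (f a) (f b)
      ≤ dist (f a) (f (a + τ)) + dist (f (a + τ)) (f (b + τ)) + dist (f (b + τ)) (f b) :=
        dist_triangle4 _ _ _ _
    _ < ε / 3 + ε / 3 + ε / 3 := by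
        gcongr
        · rw [dist_comm, dist_eq_norm]; exact hτ a
        · rw [dist_eq_norm]; exact hτ b
    _ = ε := by ring

end BohrAlmostPeriodic

namespace BoundedContinuousFunction

def translate (F : ℝ →ᵇ E) (s : ℝ) : ℝ →ᵇ E :=
  F.compContinuous (ContinuousMap.addRight s)

variable (F : ℝ →ᵇ E)

@[simp]
theorem translate_apply (s x : ℝ) : F.translate s x = F (x + s) := rfl

theorem dist_translate_le_of_isTranslationNumber {ε τ : ℝ} (hτ : IsTranslationNumber F ε τ)
    (a : ℝ) : dist (F.translate a) (F.translate (a + τ)) ≤ ε := by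
  refine (dist_le (le_trans (norm_nonneg _) (hτ 0).le)).mpr fun x => ?_
  rw [translate_apply, translate_apply, dist_comm, dist_eq_norm, ← add_assoc]
  exact (hτ (x + a)).le

theorem uniformContinuous_translate (hF : UniformContinuous F) :
    UniformContinuous F.translate := by
  rw [Metric.uniformContinuous_iff] at hF ⊢
  intro ε hε
  obtain ⟨δ, hδ, hδF⟩ := hF (ε / 2) (by positivity)
  refine ⟨δ, hδ, fun {a b} hab => ?_⟩
  refine lt_of_le_of_lt ((dist_le (by positivity)).mpr fun x => (hδF ?_).le) (half_lt_self hε)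
  simpa [Real.dist_eq] using hab

theorem totallyBounded_range_translate (hF : BohrAlmostPeriodic F) :
    TotallyBounded (Set.range F.translate) := by
  rw [Metric.totallyBounded_iff]
  intro ε hε
  obtain ⟨l, -, hl⟩ := hF.exists_isTranslationNumber_add_mem_Icc (half_pos hε)
  have hK : IsCompact (F.translate '' Set.Icc 0 l) :=
    isCompact_Icc.image
      (uniformContinuous_translate F (hF.uniformContinuous F.continuous)).continuous
  obtain ⟨c, hc, hKc⟩ := Metric.totallyBounded_iff.mp hK.totallyBounded (ε / 2) (half_pos hε)
  refine ⟨c, hc, ?_⟩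
  rintro _ ⟨a, rfl⟩
  obtain ⟨τ, hmem, hτ⟩ := hl a
  obtain ⟨y, hy, hdist⟩ := Set.mem_iUnion₂.mp (hKc ⟨a + τ, hmem, rfl⟩)
  refine Set.mem_iUnion₂.mpr ⟨y, hy, ?_⟩
  calc dist (F.translate a) y
      ≤ dist (F.translate a) (F.translate (a + τ)) + dist (F.translate (a + τ)) y :=
        dist_triangle _ _ _
    _ < ε / 2 + ε / 2 :=
        add_lt_add_of_le_of_lt (dist_translate_le_of_isTranslationNumber F hτ a) hdist
    _ = ε := add_halves ε

end BoundedContinuousFunction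

theorem BohrAlmostPeriodic.exists_tendstoUniformly_subseq [CompleteSpace E] {f : ℝ → E}
    (h : BohrAlmostPeriodic f) (hf : Continuous f) (t : ℕ → ℝ) :
    ∃ φ : ℕ → ℕ, StrictMono φ ∧
      ∃ g : ℝ → E, TendstoUniformly (fun k x => f (x + t (φ k))) g atTop := by
  obtain ⟨C, hC⟩ := h.exists_norm_le hf
  set F : ℝ →ᵇ E := .ofNormedAddCommGroup f hf C hC
  have hcpt : IsCompact (closure (Set.range F.translate)) :=
    (F.totallyBounded_range_translate h).closure.isCompact_of_isClosed isClosed_closure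
  obtain ⟨G, -, φ, hφ, hG⟩ :=
    hcpt.isSeqCompact fun n => subset_closure (Set.mem_range_self (t n))
  exact ⟨φ, hφ, G, BoundedContinuousFunction.tendsto_iff_tendstoUniformly.mp hG⟩

theorem Real.exists_seq_sub_mem_of_forall_exists_Ioo_subset {S : Set ℝ}
    (h : ∀ l > (0 : ℝ), ∃ x, Set.Ioo x (x + l) ⊆ S) :
    ∃ t : ℕ → ℝ, ∀ m n, m < n → t n - t m ∈ S := by
  obtain ⟨t, -, ht⟩ := exists_seq_of_forall_finset_exists (fun _ => True)
    (fun a b => b - a ∈ S) fun s _ => by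
      set B := ∑ a ∈ s, |a|
      obtain ⟨x, hx⟩ := h (2 * B + 2) (by positivity)
      refine ⟨x + B + 1, trivial, fun a ha => hx ?_⟩
      have ⟨hBa, haB⟩ := abs_le.mp (Finset.single_le_sum (fun a _ => abs_nonneg a) ha)
      constructor <;> linarith
  exact ⟨t, ht⟩

theorem not_tendstoUniformly_translate_of_not_isTranslationNumber {f : ℝ → E} {ε : ℝ}
    (hε : 0 < ε) {t : ℕ → ℝ}
    (ht : ∀ m n, m < n → ¬ IsTranslationNumber f ε (t n - t m)) (g : ℝ → E) :
    ¬ TendstoUniformly (fun k x => f (x + t k)) g atTop := by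
  intro hg
  obtain ⟨N, hN⟩ := Metric.uniformCauchySeqOn_iff.mp
    (tendstoUniformlyOn_univ.mpr hg).uniformCauchySeqOn ε hε
  obtain ⟨s, hs⟩ : ∃ s, ε ≤ ‖f (s + (t (N + 1) - t N)) - f s‖ := by
    simpa [IsTranslationNumber] using ht N (N + 1) N.lt_succ_self
  have hclose := hN (N + 1) N.le_succ N le_rfl (s - t N) (Set.mem_univ _)
  rw [dist_eq_norm, show s - t N + t (N + 1) = s + (t (N + 1) - t N) by ring,
    sub_add_cancel] at hclose
  exact hclose.not_ge hs

end Bohr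

theorem AlmostPeriodic.bohrAlmostPeriodic {f : ℝ → ℂ} (h : AlmostPeriodic f) :
    BohrAlmostPeriodic f := by
  intro ε hε
  by_contra! hgaps
  obtain ⟨t, ht⟩ := Real.exists_seq_sub_mem_of_forall_exists_Ioo_subset hgaps
  obtain ⟨φ, hφ, g, hg⟩ := h t
  exact not_tendstoUniformly_translate_of_not_isTranslationNumber hε
    (fun m n hmn => ht (φ m) (φ n) (hφ hmn)) g hg

/-- Bochner almost periodicity is equivalent to the Bohr definition: the set of
`ε`-translation numbers is relatively dense. -/
theorem stmt_1 (f : ℝ → ℂ) (hf : Continuous f) :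
    AlmostPeriodic f ↔
      ∀ ε > (0 : ℝ), ∃ l > (0 : ℝ), ∀ x : ℝ, ∃ τ ∈ Set.Ioo x (x + l),
        ∀ t : ℝ, ‖f (t + τ) - f t‖ < ε :=
  ⟨AlmostPeriodic.bohrAlmostPeriodic,
    fun h => BohrAlmostPeriodic.exists_tendstoUniformly_subseq h hf⟩
end

section
/- Kronecker's theorem: for real numbers λ₁,…,λₙ and θ₁,…,θₙ, the following are equivalent: (i) for all ε > 0 there exists τ ∈ ℝ with |λᵢτ − θᵢ| < ε mod 2π for all i = 1,…,n; (ii) for all integers k₁,…,kₙ with Σ kᵢλᵢ = 0, one has Σ kᵢθᵢ ≡ 0 mod 2π. -/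
open Complex Finset intervalIntegral

lemma mean_bound {ι : Type*} [Fintype ι] (α : ι → ℝ) (c : ι → ℂ) (g : ℝ → ℝ)
    (hgc : Continuous g)
    (hg : ∀ t : ℝ, (g t : ℂ) = ∑ i, c i * Complex.exp ((α i * t) * Complex.I))
    {B : ℝ} (hB : ∀ t, g t ≤ B) :
    (∑ i ∈ Finset.univ.filter (fun i => α i = 0), c i).re ≤ B := by
  classical
  set Z := ∑ i ∈ Finset.univ.filter (fun i => α i = 0), c i with hZ
  set C := ∑ i ∈ Finset.univ.filter (fun i => ¬ α i = 0), 2 * ‖c i‖ / |α i| with hC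
  have hC0 : 0 ≤ C := by
    apply Finset.sum_nonneg
    intro i _
    positivity
  have key : ∀ T : ℝ, 0 < T → Z.re * T ≤ B * T + C := by
    intro T hT
    have hint : ∀ i : ι, IntervalIntegrable (fun t : ℝ => c i * Complex.exp ((α i * t) * Complex.I)) MeasureTheory.volume 0 T := by
      intro i
      apply Continuous.intervalIntegrable
      continuity
    have I1 : (∫ t in (0:ℝ)..T, (g t : ℂ)) = ∑ i, c i * ∫ t in (0:ℝ)..T, Complex.exp ((α i * t) * Complex.I) := by
      rw [intervalIntegral.integral_congr (g := fun t => ∑ i, c i * Complex.exp ((α i * t) * Complex.I)) (fun t _ => hg t)]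
      rw [intervalIntegral.integral_finset_sum (fun i _ => hint i)]
      simp_rw [intervalIntegral.integral_const_mul]
    -- split
    have I2 : ∑ i, c i * ∫ t in (0:ℝ)..T, Complex.exp ((α i * t) * Complex.I)
        = Z * T + ∑ i ∈ Finset.univ.filter (fun i => ¬ α i = 0),
            c i * ((Complex.exp ((α i * Complex.I) * T) - 1) / (α i * Complex.I)) := by
      rw [← Finset.sum_filter_add_sum_filter_not Finset.univ (fun i => α i = 0)]
      congr 1
      · rw [hZ, Finset.sum_mul]
        apply Finset.sum_congr rfl
        intro i hi
        have : α i = 0 := (Finset.mem_filter.1 hi).2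
        simp [this]
      · apply Finset.sum_congr rfl
        intro i hi
        have hαi : ¬ α i = 0 := (Finset.mem_filter.1 hi).2
        congr 1
        have hcast : ∀ t : ℝ, ((α i : ℝ) : ℂ) * (t:ℂ) * Complex.I = ((α i : ℂ) * Complex.I) * t := by
          intro t; ring
        rw [intervalIntegral.integral_congr (g := fun t : ℝ => Complex.exp ((α i * Complex.I) * t)) (fun t _ => by rw [hcast t])]
        rw [integral_exp_mul_complex (by simp [hαi, Complex.ext_iff] : (α i : ℂ) * Complex.I ≠ 0)]
        norm_num
    have I3 : ‖(∫ t in (0:ℝ)..T, (g t : ℂ)) - Z * T‖ ≤ C := by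
      rw [I1, I2, add_sub_cancel_left]
      refine le_trans (norm_sum_le _ _) ?_
      apply Finset.sum_le_sum
      intro i hi
      have hαi : ¬ α i = 0 := (Finset.mem_filter.1 hi).2
      rw [norm_mul, norm_div]
      have h1 : ‖(α i : ℂ) * Complex.I‖ = |α i| := by
        simp
      have h2 : ‖Complex.exp ((α i * Complex.I) * T) - 1‖ ≤ 2 := by
        refine le_trans (norm_sub_le _ _) ?_
        have : ‖Complex.exp ((α i * Complex.I) * T)‖ = 1 := by
          rw [Complex.norm_exp]
          simp
        simp [this]
        norm_num
      rw [h1]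
      rw [show (2:ℝ) * ‖c i‖ / |α i| = ‖c i‖ * (2 / |α i|) by ring]
      gcongr
    have I4 : (∫ t in (0:ℝ)..T, (g t : ℂ)) = ((∫ t in (0:ℝ)..T, g t : ℝ) : ℂ) := by
      rw [intervalIntegral.integral_ofReal]
    have I5 : (∫ t in (0:ℝ)..T, g t) ≤ B * T := by
      calc (∫ t in (0:ℝ)..T, g t) ≤ ∫ t in (0:ℝ)..T, B :=
            intervalIntegral.integral_mono_on hT.le (hgc.intervalIntegrable _ _)
              (intervalIntegrable_const) (fun t _ => hB t)
        _ = B * T := by simp [mul_comm]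
    rw [I4] at I3
    have I6 : |(∫ t in (0:ℝ)..T, g t) - Z.re * T| ≤ C := by
      have h := Complex.abs_re_le_norm (((∫ t in (0:ℝ)..T, g t : ℝ) : ℂ) - Z * T)
      have hre : (((∫ t in (0:ℝ)..T, g t : ℝ) : ℂ) - Z * T).re = (∫ t in (0:ℝ)..T, g t) - Z.re * T := by
        simp [Complex.sub_re, Complex.mul_re]
      rw [hre] at h
      exact le_trans h I3
    have := abs_le.1 I6
    linarith [this.1]
  by_contra h
  push_neg at h
  set δ := Z.re - B with hδ
  have hδ0 : 0 < δ := by linarith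
  have := key ((C + 1)/δ) (by positivity)
  have hT : Z.re * ((C+1)/δ) - B * ((C+1)/δ) = C + 1 := by
    field_simp [hδ]
    ring
  linarith

lemma factor_expand (x : ℝ) (N : ℕ) :
    (((1 + Real.cos x)/2 : ℝ) : ℂ)^N =
      ∑ a : Fin (N+1), ∑ b : Fin (N+1),
        ((N.choose a * N.choose b : ℕ) : ℂ)/4^N
          * Complex.exp ((((a:ℕ):ℝ) - ((b:ℕ):ℝ)) * x * Complex.I) := by
  have base : (((1 + Real.cos x)/2 : ℝ) : ℂ)
      = (1 + Complex.exp (x * Complex.I)) * (1 + Complex.exp (-(x:ℂ) * Complex.I)) / 4 := by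
    have h1 : Complex.exp (x * Complex.I) = Complex.cos x + Complex.sin x * Complex.I :=
      Complex.exp_mul_I _
    have h2 : Complex.exp (-(x:ℂ) * Complex.I) = Complex.cos x - Complex.sin x * Complex.I := by
      rw [Complex.exp_mul_I]
      simp [Complex.cos_neg, Complex.sin_neg]
      ring
    have h3 : Complex.sin x ^ 2 + Complex.cos x ^ 2 = 1 := Complex.sin_sq_add_cos_sq x
    push_cast [Complex.ofReal_cos]
    rw [h1, h2]
    linear_combination (-(1:ℂ)/4) * h3 + (Complex.sin (x:ℂ) ^ 2 / 4) * Complex.I_sq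
  rw [base, div_pow, mul_pow]
  have hb : ∀ u : ℂ, (1 + u)^N = ∑ a : Fin (N+1), (N.choose a : ℂ) * u ^ (a:ℕ) := by
    intro u
    rw [add_comm, add_pow]
    rw [← Fin.sum_univ_eq_sum_range (fun k => u ^ k * 1 ^ (N - k) * (N.choose k : ℂ))]
    apply Finset.sum_congr rfl
    intro a _
    ring
  rw [hb, hb, Finset.sum_mul_sum]
  have h4 : ((4:ℂ)^N) = ((4:ℝ)^N : ℝ) := by push_cast; ring
  rw [Finset.sum_div]
  apply Finset.sum_congr rfl
  intro a _
  rw [Finset.sum_div]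
  apply Finset.sum_congr rfl
  intro b _
  have he : Complex.exp ((x:ℂ) * Complex.I) ^ (a:ℕ) * Complex.exp (-(x:ℂ) * Complex.I) ^ (b:ℕ)
      = Complex.exp ((((a:ℕ):ℝ) - ((b:ℕ):ℝ)) * x * Complex.I) := by
    rw [← Complex.exp_nat_mul, ← Complex.exp_nat_mul, ← Complex.exp_add]
    congr 1
    push_cast
    ring
  rw [mul_mul_mul_comm, he]
  push_cast
  ring

lemma core {ι : Type*} [Fintype ι] [DecidableEq ι] (μ φ : ι → ℝ)
    (hind : ∀ k : ι → ℤ, (∑ j, (k j : ℝ) * μ j) = 0 → k = 0)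
    {ε : ℝ} (hε : 0 < ε) (hεle : ε ≤ Real.pi / 2) :
    ∃ τ : ℝ, ∀ j, ∃ m : ℤ, |μ j * τ - φ j - 2 * Real.pi * m| < ε := by
  classical
  by_contra hcon
  push_neg at hcon
  set d := Fintype.card ι with hd
  set q : ℝ := (1 + Real.cos ε)/2 with hq
  have hπ := Real.pi_pos
  have hc0 : 0 ≤ Real.cos ε := Real.cos_nonneg_of_mem_Icc ⟨by linarith, hεle⟩
  have hc1 : Real.cos ε < 1 := by
    rcases lt_or_eq_of_le (Real.cos_le_one ε) with h | h
    · exact h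
    · exfalso
      have := (Real.cos_eq_one_iff_of_lt_of_lt (by linarith) (by linarith)).1 h
      linarith
  have hq0 : 0 < q := by rw [hq]; linarith
  have hq1 : q < 1 := by rw [hq]; linarith
  have main : ∀ N : ℕ, ((1:ℝ)/(N+1))^d ≤ q^N := by
    intro N
    set σtype := ((ι → Fin (N+1)) × (ι → Fin (N+1)))
    set αf : σtype → ℝ :=
      fun p => ∑ j, ((((p.1 j : ℕ):ℝ) - ((p.2 j : ℕ):ℝ)) * μ j) with hαf
    set cf : σtype → ℂ :=
      fun p => ∏ j, ((((N.choose (p.1 j) * N.choose (p.2 j) : ℕ)):ℂ)/4^N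
        * Complex.exp ((-((((p.1 j : ℕ):ℝ) - ((p.2 j : ℕ):ℝ)) * φ j) : ℝ) * Complex.I)) with hcf
    set g : ℝ → ℝ := fun t => ∏ j, ((1 + Real.cos (μ j * t - φ j))/2)^N with hgdef
    have hgc : Continuous g := by
      apply continuous_finset_prod
      intro j _
      fun_prop
    have hg : ∀ t, (g t : ℂ) = ∑ p, cf p * Complex.exp ((αf p * t) * Complex.I) := by
      intro t
      have step1 : (g t : ℂ) = ∏ j, ∑ y : Fin (N+1) × Fin (N+1),
          (((N.choose y.1 * N.choose y.2 : ℕ)):ℂ)/4^N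
            * Complex.exp ((((y.1:ℕ):ℝ) - ((y.2:ℕ):ℝ)) * (μ j * t - φ j) * Complex.I) := by
        rw [hgdef, Complex.ofReal_prod]
        apply Finset.prod_congr rfl
        intro j _
        rw [Complex.ofReal_pow, factor_expand (μ j * t - φ j) N]
        rw [← Fintype.sum_prod_type']
        norm_cast
      rw [step1, Finset.prod_univ_sum]
      rw [← (Equiv.arrowProdEquivProdArrow ι (fun _ => Fin (N+1)) (fun _ => Fin (N+1))).sum_comp
        (fun p : σtype => cf p * Complex.exp ((αf p * t) * Complex.I))]
      rw [Fintype.piFinset_univ]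
      apply Finset.sum_congr rfl
      intro h _
      rw [Equiv.arrowProdEquivProdArrow]
      simp only [Equiv.coe_fn_mk]
      rw [hcf, hαf]
      simp only
      rw [Finset.prod_mul_distrib, Finset.prod_mul_distrib]
      rw [← Complex.exp_sum, ← Complex.exp_sum]
      rw [mul_assoc, ← Complex.exp_add]
      congr 1
      apply congrArg
      have hcast : ((∑ j, ((((h j).1 : ℕ):ℝ) - (((h j).2 : ℕ):ℝ)) * μ j : ℝ) : ℂ) * t * Complex.I
          = ∑ j, ((((((h j).1 : ℕ):ℝ) - (((h j).2 : ℕ):ℝ)) * μ j : ℝ) : ℂ) * t * Complex.I := by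
        push_cast
        rw [Finset.sum_mul, Finset.sum_mul]
      rw [hcast, ← Finset.sum_add_distrib]
      apply Finset.sum_congr rfl
      intro j _
      push_cast
      ring
    have hB : ∀ t, g t ≤ q^N := by
      intro t
      obtain ⟨j0, hj0⟩ := hcon t
      have hfac : ∀ j, 0 ≤ (1 + Real.cos (μ j * t - φ j))/2 ∧ (1 + Real.cos (μ j * t - φ j))/2 ≤ 1 := by
        intro j
        constructor
        · linarith [Real.neg_one_le_cos (μ j * t - φ j)]
        · linarith [Real.cos_le_one (μ j * t - φ j)]
      have hj0' : (1 + Real.cos (μ j0 * t - φ j0))/2 ≤ q := by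
        set x := μ j0 * t - φ j0 with hx
        set m : ℤ := round (x / (2 * Real.pi)) with hm
        set y := x - 2 * Real.pi * m with hy
        have hylepi : |y| ≤ Real.pi := by
          have h1 : |x / (2 * Real.pi) - m| ≤ 1/2 := abs_sub_round _
          have h2 : y = (x / (2 * Real.pi) - m) * (2 * Real.pi) := by
            field_simp [hy]
            exact hy
          rw [h2, abs_mul, abs_of_pos (by linarith : (0:ℝ) < 2 * Real.pi)]
          calc |x / (2 * Real.pi) - ↑m| * (2 * Real.pi) ≤ (1/2) * (2 * Real.pi) := by
                apply mul_le_mul_of_nonneg_right h1; linarith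
            _ = Real.pi := by ring
        have hyge : ε ≤ |y| := hj0 m
        have hcoseq : Real.cos x = Real.cos y := by
          have : x = y + m * (2 * Real.pi) := by rw [hy]; ring
          rw [this, Real.cos_add_int_mul_two_pi]
        have : Real.cos x ≤ Real.cos ε := by
          rw [hcoseq, ← Real.cos_abs y]
          exact Real.cos_le_cos_of_nonneg_of_le_pi hε.le hylepi hyge
        rw [hq]
        linarith
      calc g t = ((1 + Real.cos (μ j0 * t - φ j0))/2)^N
            * ∏ j ∈ Finset.univ.erase j0, ((1 + Real.cos (μ j * t - φ j))/2)^N := by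
            rw [hgdef]
            exact (Finset.mul_prod_erase Finset.univ _ (Finset.mem_univ j0)).symm
        _ ≤ q^N * 1 := by
            apply mul_le_mul
            · exact pow_le_pow_left₀ (hfac j0).1 hj0' N
            · apply Finset.prod_le_one
              · intro j _; exact pow_nonneg (hfac j).1 N
              · intro j _; exact pow_le_one₀ (hfac j).1 (hfac j).2
            · apply Finset.prod_nonneg; intro j _; exact pow_nonneg (hfac j).1 N
            · exact pow_nonneg hq0.le N
        _ = q^N := mul_one _
    have hZle := mean_bound αf cf g hgc hg hB
    -- now compute the zero-frequency sum
    have hfilter : Finset.univ.filter (fun p => αf p = 0)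
        = (Finset.univ : Finset (ι → Fin (N+1))).image (fun a => (a, a)) := by
      ext p
      simp only [Finset.mem_filter, Finset.mem_univ, true_and, Finset.mem_image]
      constructor
      · intro hp
        have hk : (fun j => ((p.1 j : ℕ) : ℤ) - ((p.2 j : ℕ) : ℤ)) = 0 := by
          apply hind
          rw [← hp, hαf]
          apply Finset.sum_congr rfl
          intro j _
          push_cast
          ring
        refine ⟨p.1, ?_⟩
        have : p.2 = p.1 := by
          funext j
          have := congrFun hk j
          simp only [Pi.zero_apply, sub_eq_zero] at this
          have hnat : (p.1 j : ℕ) = (p.2 j : ℕ) := by exact_mod_cast this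
          exact (Fin.ext hnat).symm
        exact Prod.ext rfl this.symm
      · rintro ⟨a, rfl⟩
        rw [hαf]
        apply Finset.sum_eq_zero
        intro j _
        simp
    have hinj : Set.InjOn (fun a : ι → Fin (N+1) => (a, a)) (Finset.univ : Finset (ι → Fin (N+1))) := by
      intro a _ b _ hab
      exact congrArg Prod.fst hab
    have hZre : (∑ p ∈ Finset.univ.filter (fun p => αf p = 0), cf p).re
        = ∑ a : ι → Fin (N+1), ∏ j, ((N.choose (a j) : ℝ)^2/4^N) := by
      rw [hfilter, Finset.sum_image hinj]
      have : ∀ a : ι → Fin (N+1), cf (a, a)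
          = ((∏ j, ((N.choose (a j) : ℝ)^2/4^N) : ℝ) : ℂ) := by
        intro a
        rw [hcf]
        push_cast
        apply Finset.prod_congr rfl
        intro j _
        simp only [sub_self, zero_mul, neg_zero, Complex.ofReal_zero, zero_mul,
          Complex.exp_zero, mul_one]
        push_cast
        ring
      rw [Finset.sum_congr rfl (fun a _ => this a), ← Complex.ofReal_sum]
      rw [Complex.ofReal_re]
    rw [hZre] at hZle
    refine le_trans ?_ hZle
    have hprod : ∑ a : ι → Fin (N+1), ∏ j, ((N.choose (a j) : ℝ)^2/4^N)
        = ∏ _j : ι, (∑ b : Fin (N+1), (N.choose (b : ℕ) : ℝ)^2/4^N) := by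
      rw [Finset.prod_univ_sum]
      rw [Fintype.piFinset_univ]
    rw [hprod]
    have hfactor : ((1:ℝ)/(N+1)) ≤ ∑ b : Fin (N+1), (N.choose (b : ℕ) : ℝ)^2/4^N := by
      have hsum : ∑ b : Fin (N+1), (N.choose (b : ℕ) : ℝ) = 2^N := by
        rw [Fin.sum_univ_eq_sum_range (fun m => ((N.choose m : ℕ):ℝ)) (N+1)]
        exact_mod_cast Nat.sum_range_choose N
      have hcs : (∑ b : Fin (N+1), (N.choose (b : ℕ) : ℝ))^2
          ≤ (N+1) * ∑ b : Fin (N+1), (N.choose (b : ℕ) : ℝ)^2 := by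
        have := sq_sum_le_card_mul_sum_sq (s := (Finset.univ : Finset (Fin (N+1))))
          (f := fun b => (N.choose (b : ℕ) : ℝ))
        simpa using this
      rw [hsum] at hcs
      rw [← Finset.sum_div, div_le_div_iff₀ (by positivity) (by positivity)]
      have h4 : ((2:ℝ)^N)^2 = 4^N := by
        rw [← pow_mul, mul_comm, pow_mul]
        norm_num
      nlinarith [hcs]
    have hpp : ∏ _j : ι, ((1:ℝ)/(N+1)) ≤ ∏ _j : ι, (∑ b : Fin (N+1), (N.choose (b : ℕ) : ℝ)^2/4^N) := by
      apply Finset.prod_le_prod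
      · intro j _; positivity
      · intro j _; exact hfactor
    simpa [Finset.prod_const, hd] using hpp
  -- final contradiction
  have hsum := summable_pow_mul_geometric_of_norm_lt_one (R := ℝ) d
    (r := q) (by rw [Real.norm_eq_abs, abs_of_pos hq0]; exact hq1)
  have htend := hsum.tendsto_atTop_zero
  have hge : ∀ N : ℕ, q ≤ ((N+1:ℕ):ℝ)^d * q^(N+1) := by
    intro N
    have h1 := main N
    have h2 : (1:ℝ) ≤ ((N:ℝ)+1)^d * q^N := by
      have hN1 : (0:ℝ) < (N:ℝ)+1 := by positivity
      have := mul_le_mul_of_nonneg_left h1 (le_of_lt (pow_pos hN1 d))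
      rw [← mul_pow] at this
      rw [mul_one_div, div_self (ne_of_gt hN1), one_pow] at this
      linarith
    have : q * 1 ≤ q * (((N:ℝ)+1)^d * q^N) := by
      apply mul_le_mul_of_nonneg_left h2 hq0.le
    push_cast
    calc q = q * 1 := (mul_one q).symm
      _ ≤ q * (((N:ℝ)+1)^d * q^N) := this
      _ = ((N:ℝ)+1)^d * q^(N+1) := by ring
  have hev : ∀ᶠ N : ℕ in Filter.atTop, ((N:ℕ):ℝ)^d * q^N < q := by
    have := htend.eventually (eventually_lt_nhds hq0)
    exact this
  obtain ⟨N, hN⟩ := (hev.and (Filter.eventually_ge_atTop 1)).exists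
  have := hge (N-1)
  rw [Nat.sub_add_cancel hN.2] at this
  exact absurd hN.1 (not_lt.2 this)

lemma shift_exists (n : ℕ) (lam θ : Fin n → ℝ)
    (hyp : ∀ k : Fin n → ℤ, (∑ i, (k i : ℝ) * lam i) = 0 →
        ∃ m : ℤ, (∑ i, (k i : ℝ) * θ i) = 2 * Real.pi * m) :
    ∃ w : Fin n → ℤ, ∀ k : Fin n → ℤ, (∑ i, (k i : ℝ) * lam i) = 0 →
      (∑ i, (k i : ℝ) * (θ i - 2 * Real.pi * w i)) = 0 := by
  classical
  have hπ := Real.pi_ne_zero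
  set φlam : (Fin n → ℤ) →ₗ[ℤ] ℝ :=
    { toFun := fun k => ∑ i, (k i : ℝ) * lam i
      map_add' := by
        intro k k'
        rw [← Finset.sum_add_distrib]
        apply Finset.sum_congr rfl
        intro i _
        simp only [Pi.add_apply]
        push_cast
        ring
      map_smul' := by
        intro c k
        simp only [RingHom.id_apply, zsmul_eq_mul]
        rw [Finset.mul_sum]
        apply Finset.sum_congr rfl
        intro i _
        push_cast [Pi.smul_apply, smul_eq_mul, Pi.mul_apply, Pi.intCast_apply]
        ring } with hφlam
  set L := LinearMap.ker φlam with hL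
  haveI hnzs : NoZeroSMulDivisors ℤ ((Fin n → ℤ) ⧸ L) := by
    constructor
    intro c x h
    by_cases hc : c = 0
    · exact Or.inl hc
    · right
      obtain ⟨k, rfl⟩ := Submodule.Quotient.mk_surjective L x
      rw [← Submodule.Quotient.mk_smul, Submodule.Quotient.mk_eq_zero] at h
      rw [Submodule.Quotient.mk_eq_zero]
      rw [hL, LinearMap.mem_ker] at h ⊢
      rw [map_smul] at h
      have : (c:ℝ) * φlam k = 0 := by
        rw [← h]
        simp [zsmul_eq_mul]
      rcases mul_eq_zero.1 this with h' | h'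
      · exact absurd (by exact_mod_cast h') hc
      · exact h'
  obtain ⟨s, hs⟩ := Module.projective_lifting_property L.mkQ LinearMap.id
    (Submodule.mkQ_surjective L)
  have hmem : ∀ k : Fin n → ℤ, k - s (L.mkQ k) ∈ L := by
    intro k
    have : L.mkQ (k - s (L.mkQ k)) = 0 := by
      rw [map_sub]
      have := congrFun (congrArg DFunLike.coe hs) (L.mkQ k)
      simp only [LinearMap.coe_comp, Function.comp_apply, LinearMap.id_coe, id_eq] at this
      rw [this, sub_self]
    rwa [← LinearMap.mem_ker, Submodule.ker_mkQ] at this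
  set u : (Fin n → ℤ) →ₗ[ℤ] L :=
    (LinearMap.id - s.comp L.mkQ).codRestrict L (by
      intro k
      simpa using hmem k) with hu
  -- the map tL : L → ℤ
  have hchoice : ∀ kk : L, ∃ m : ℤ, (∑ i, ((kk : Fin n → ℤ) i : ℝ) * θ i) = 2 * Real.pi * m := by
    intro kk
    apply hyp
    have : φlam (kk : Fin n → ℤ) = 0 := kk.2
    exact this
  set tfun : L → ℤ := fun kk => Classical.choose (hchoice kk) with htfun
  have htspec : ∀ kk : L, (∑ i, ((kk : Fin n → ℤ) i : ℝ) * θ i) = 2 * Real.pi * tfun kk :=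
    fun kk => Classical.choose_spec (hchoice kk)
  have htadd : ∀ a b : L, tfun (a + b) = tfun a + tfun b := by
    intro a b
    have h1 := htspec (a + b)
    have h2 := htspec a
    have h3 := htspec b
    have hsum : (∑ i, (((a + b : L) : Fin n → ℤ) i : ℝ) * θ i)
        = (∑ i, ((a : Fin n → ℤ) i : ℝ) * θ i) + (∑ i, ((b : Fin n → ℤ) i : ℝ) * θ i) := by
      rw [← Finset.sum_add_distrib]
      apply Finset.sum_congr rfl
      intro i _
      simp only [Submodule.coe_add, Pi.add_apply]
      push_cast
      ring
    rw [h1, h2, h3] at hsum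
    have : (2 * Real.pi) * (tfun (a+b) : ℝ) = (2 * Real.pi) * ((tfun a : ℝ) + tfun b) := by
      rw [hsum]; ring
    have h2π : (2 * Real.pi) ≠ 0 := by positivity
    have := mul_left_cancel₀ h2π this
    exact_mod_cast this
  set tL : L →ₗ[ℤ] ℤ := (AddMonoidHom.mk' tfun htadd).toIntLinearMap with htL
  set T : (Fin n → ℤ) →ₗ[ℤ] ℤ := tL.comp u with hT
  refine ⟨fun i => T (Pi.single i 1), ?_⟩
  intro k hk
  have hkL : k ∈ L := by
    rw [hL, LinearMap.mem_ker]
    exact hk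
  -- T k = tfun ⟨k, hkL⟩
  have huk : u k = ⟨k, hkL⟩ := by
    apply Subtype.ext
    simp only [hu, LinearMap.codRestrict_apply, LinearMap.sub_apply, LinearMap.id_apply,
      LinearMap.coe_comp, Function.comp_apply]
    have : L.mkQ k = 0 := by rwa [← LinearMap.mem_ker, Submodule.ker_mkQ]
    rw [this, map_zero, sub_zero]
  have hTk : T k = tfun ⟨k, hkL⟩ := by
    rw [hT, LinearMap.comp_apply, huk]
    rfl
  -- decomposition
  have hdecomp : T k = ∑ i, k i * T (Pi.single i 1) := by
    have hks : k = ∑ i, k i • Pi.single i (1:ℤ) := by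
      conv_lhs => rw [← Finset.univ_sum_single k]
      apply Finset.sum_congr rfl
      intro i _
      rw [← Pi.single_smul, smul_eq_mul, mul_one]
    calc T k = T (∑ i, k i • Pi.single i (1:ℤ)) := by rw [← hks]
      _ = ∑ i, k i • T (Pi.single i (1:ℤ)) := by rw [map_sum]; simp_rw [map_smul]
      _ = ∑ i, k i * T (Pi.single i 1) := by simp [smul_eq_mul]
  have hfin : (∑ i, (k i : ℝ) * θ i) = 2 * Real.pi * (T k : ℝ) := by
    rw [hTk]
    exact_mod_cast htspec ⟨k, hkL⟩
  have hsplit : (∑ i, (k i : ℝ) * (θ i - 2 * Real.pi * T (Pi.single i 1)))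
      = (∑ i, (k i : ℝ) * θ i) - 2 * Real.pi * (∑ i, (k i : ℝ) * (T (Pi.single i 1) : ℝ)) := by
    rw [Finset.mul_sum, ← Finset.sum_sub_distrib]
    apply Finset.sum_congr rfl
    intro i _
    ring
  rw [hsplit, hfin]
  have : (∑ i, (k i : ℝ) * (T (Pi.single i 1) : ℝ)) = (T k : ℝ) := by
    rw [hdecomp]
    push_cast
    ring
  rw [this]
  ring

lemma clear_denoms {ι : Type*} [Fintype ι] (κ : ι → ℚ) :
    ∃ (D : ℤ) (k : ι → ℤ), 0 < D ∧ ∀ i, (k i : ℚ) = κ i * D := by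
  classical
  refine ⟨∏ i, ((κ i).den : ℤ),
    fun i => (κ i).num * ∏ j ∈ Finset.univ.erase i, ((κ j).den : ℤ), ?_, ?_⟩
  · apply Finset.prod_pos
    intro i _
    exact_mod_cast (κ i).den_pos
  · intro i
    have hd : (∏ j, ((κ j).den : ℤ)) = ((κ i).den : ℤ) * ∏ j ∈ Finset.univ.erase i, ((κ j).den : ℤ) :=
      (Finset.mul_prod_erase Finset.univ _ (Finset.mem_univ i)).symm
    rw [hd]
    push_cast
    rw [show (κ i : ℚ) * ((((κ i).den : ℚ)) * ∏ j ∈ Finset.univ.erase i, ((κ j).den : ℚ))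
        = ((κ i : ℚ) * ((κ i).den : ℚ)) * ∏ j ∈ Finset.univ.erase i, ((κ j).den : ℚ) by ring]
    rw [Rat.mul_den_eq_num]

lemma int_of_approx {x : ℝ} (h : ∀ δ > (0:ℝ), ∃ m : ℤ, |x - 2*Real.pi*m| < δ) :
    ∃ m : ℤ, x = 2*Real.pi*m := by
  have hπ := Real.pi_pos
  obtain ⟨m1, hm1⟩ := h Real.pi Real.pi_pos
  refine ⟨m1, ?_⟩
  by_contra hne
  set δ := |x - 2*Real.pi*m1| with hδ
  have hδ0 : 0 < δ := abs_pos.2 (sub_ne_zero.2 hne)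
  obtain ⟨m2, hm2⟩ := h (min δ Real.pi) (lt_min hδ0 Real.pi_pos)
  have hne2 : m2 ≠ m1 := by
    intro he
    rw [he] at hm2
    exact absurd (lt_of_lt_of_le hm2 (min_le_left _ _)) (lt_irrefl δ)
  have h1 : |2*Real.pi*(m1:ℝ) - 2*Real.pi*(m2:ℝ)| < 2*Real.pi := by
    calc |2*Real.pi*(m1:ℝ) - 2*Real.pi*(m2:ℝ)|
        ≤ |2*Real.pi*(m1:ℝ) - x| + |x - 2*Real.pi*(m2:ℝ)| := abs_sub_le _ _ _
      _ = |x - 2*Real.pi*(m1:ℝ)| + |x - 2*Real.pi*(m2:ℝ)| := by rw [abs_sub_comm]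
      _ < Real.pi + Real.pi :=
          add_lt_add hm1 (lt_of_lt_of_le hm2 (min_le_right _ _))
      _ = 2*Real.pi := by ring
  have h2 : (1:ℝ) ≤ |(m1:ℝ) - (m2:ℝ)| := by
    have : (1:ℤ) ≤ |m1 - m2| := Int.one_le_abs (sub_ne_zero.2 (Ne.symm hne2))
    calc (1:ℝ) = ((1:ℤ):ℝ) := by norm_num
      _ ≤ ((|m1 - m2| : ℤ) : ℝ) := by exact_mod_cast this
      _ = |(m1:ℝ) - (m2:ℝ)| := by push_cast; rfl
  have h3 : |2*Real.pi*(m1:ℝ) - 2*Real.pi*(m2:ℝ)| = 2*Real.pi * |(m1:ℝ) - (m2:ℝ)| := by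
    rw [show 2*Real.pi*(m1:ℝ) - 2*Real.pi*(m2:ℝ) = (2*Real.pi) * ((m1:ℝ) - (m2:ℝ)) by ring,
      abs_mul, abs_of_pos (by linarith : (0:ℝ) < 2*Real.pi)]
  rw [h3] at h1
  nlinarith

/-- Kronecker's theorem: simultaneous approximation of `θᵢ` by `λᵢ τ` mod `2π`
is possible iff every integer relation among the `λᵢ` is matched by the `θᵢ`
mod `2π`. -/
theorem stmt_4 (n : ℕ) (lam θ : Fin n → ℝ) :
    (∀ ε > (0 : ℝ), ∃ τ : ℝ, ∀ i : Fin n, ∃ m : ℤ,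
        |lam i * τ - θ i - 2 * Real.pi * m| < ε) ↔
      (∀ k : Fin n → ℤ, (∑ i, (k i : ℝ) * lam i) = 0 →
        ∃ m : ℤ, (∑ i, (k i : ℝ) * θ i) = 2 * Real.pi * m) := by
  classical
  have hπ := Real.pi_pos
  constructor
  · -- easy direction
    intro happrox k hk
    apply int_of_approx
    intro δ hδ
    set K : ℝ := 1 + ∑ i, |(k i : ℝ)| with hK
    have hK0 : 0 < K := by
      rw [hK]
      have : (0:ℝ) ≤ ∑ i, |(k i : ℝ)| := Finset.sum_nonneg fun i _ => abs_nonneg _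
      linarith
    obtain ⟨τ, hτ⟩ := happrox (δ / K) (by positivity)
    choose m hm using hτ
    refine ⟨-∑ i, k i * m i, ?_⟩
    have hsplit : ∑ i, (k i:ℝ) * (lam i * τ - θ i - 2*Real.pi*(m i))
        = (∑ i, (k i:ℝ)*lam i)*τ - (∑ i, (k i:ℝ)*θ i) - 2*Real.pi*(∑ i, (k i:ℝ)*(m i:ℝ)) := by
      rw [Finset.sum_mul, Finset.mul_sum, ← Finset.sum_sub_distrib, ← Finset.sum_sub_distrib]
      apply Finset.sum_congr rfl
      intro i _
      ring
    have hcast2 : ((-∑ i, k i * m i : ℤ):ℝ) = -∑ i, (k i:ℝ)*(m i:ℝ) := by push_cast; ring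
    have hkey : (∑ i, (k i : ℝ) * θ i) - 2*Real.pi*((-∑ i, k i * m i : ℤ):ℝ)
        = -∑ i, (k i : ℝ) * (lam i * τ - θ i - 2 * Real.pi * m i) := by
      rw [hcast2]
      linear_combination hsplit + τ * hk
    rw [hkey, abs_neg]
    have hbound : |∑ i, (k i : ℝ) * (lam i * τ - θ i - 2 * Real.pi * m i)|
        ≤ ∑ i, |(k i : ℝ)| * (δ/K) := by
      refine le_trans (Finset.abs_sum_le_sum_abs _ _) ?_
      apply Finset.sum_le_sum
      intro i _
      rw [abs_mul]
      exact mul_le_mul_of_nonneg_left (hm i).le (abs_nonneg _)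
    have hb2 : (∑ i, |(k i : ℝ)| * (δ/K)) ≤ (K - 1) * (δ/K) := by
      rw [← Finset.sum_mul]
      apply mul_le_mul_of_nonneg_right _ (by positivity)
      rw [hK]
      linarith
    have hb3 : (K - 1) * (δ/K) < K * (δ/K) := by
      apply mul_lt_mul_of_pos_right _ (by positivity)
      linarith
    have hb4 : K * (δ/K) = δ := by field_simp
    calc |∑ i, (k i : ℝ) * (lam i * τ - θ i - 2 * Real.pi * m i)|
        ≤ ∑ i, |(k i : ℝ)| * (δ/K) := hbound
      _ ≤ (K - 1) * (δ/K) := hb2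
      _ < K * (δ/K) := hb3
      _ = δ := by rw [hb4]
  · -- hard direction
    intro hyp ε hε
    obtain ⟨w, hw⟩ := shift_exists n lam θ hyp
    set θ' : Fin n → ℝ := fun i => θ i - 2*Real.pi*(w i) with hθ'
    have hratP : ∀ κ : Fin n → ℚ, (∑ i, (κ i : ℝ) * lam i) = 0 →
        (∑ i, (κ i : ℝ) * θ' i) = 0 := by
      intro κ hκ
      obtain ⟨D, k, hD, hk⟩ := clear_denoms κ
      have hcast : ∀ i, (k i : ℝ) = (κ i : ℝ) * (D:ℝ) := by
        intro i
        exact_mod_cast congrArg (fun q : ℚ => (q:ℝ)) (hk i)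
      have h1 : (∑ i, (k i : ℝ) * lam i) = 0 := by
        have : (∑ i, (k i : ℝ) * lam i) = (D:ℝ) * ∑ i, (κ i : ℝ) * lam i := by
          rw [Finset.mul_sum]
          apply Finset.sum_congr rfl
          intro i _
          rw [hcast i]; ring
        rw [this, hκ, mul_zero]
      have h2 := hw k h1
      have h3 : (∑ i, (k i : ℝ) * θ' i) = (D:ℝ) * ∑ i, (κ i : ℝ) * θ' i := by
        rw [Finset.mul_sum]
        apply Finset.sum_congr rfl
        intro i _
        rw [hcast i]; ring
      rw [h3] at h2
      rcases mul_eq_zero.1 h2 with h' | h'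
      · exact absurd h' (by exact_mod_cast hD.ne')
      · exact h'
    obtain ⟨b, hbsub, hbspan, hbind⟩ := exists_linearIndependent ℚ (Set.range lam)
    have hbfin : b.Finite := Set.Finite.subset (Set.finite_range lam) hbsub
    haveI := hbfin.fintype
    have hidx : ∀ x : b, ∃ i : Fin n, lam i = (x:ℝ) := fun x => hbsub x.2
    choose jdx hjdx using hidx
    have hcoord : ∀ i : Fin n, ∃ c : b → ℚ, ∑ x : b, c x • (x:ℝ) = lam i := by
      intro i
      have hmem : lam i ∈ Submodule.span ℚ b := by
        rw [hbspan]
        exact Submodule.subset_span ⟨i, rfl⟩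
      rw [show b = Set.range ((↑) : b → ℝ) from (Subtype.range_coe).symm] at hmem
      exact (Submodule.mem_span_range_iff_exists_fun ℚ).1 hmem
    choose c hc using hcoord
    obtain ⟨D, a2, hD, ha⟩ := clear_denoms (fun p : Fin n × b => c p.1 p.2)
    set a : Fin n → b → ℤ := fun i x => a2 (i, x) with hadef
    have hDR : (0:ℝ) < (D:ℝ) := by exact_mod_cast hD
    have hcr : ∀ i x, (c i x : ℝ) = (a i x : ℝ) / (D:ℝ) := by
      intro i x
      have := ha (i, x)
      have h' : ((a i x : ℚ) : ℝ) = ((c i x * D : ℚ) : ℝ) := by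
        rw [hadef]; exact_mod_cast congrArg (fun q : ℚ => (q:ℝ)) this
      push_cast at h'
      field_simp
      linarith [h']
    set μf : b → ℝ := fun x => (x:ℝ) / D with hμf
    set ψ : b → ℝ := fun x => θ' (jdx x) / D with hψ
    have hind : ∀ k : b → ℤ, (∑ x, (k x : ℝ) * μf x) = 0 → k = 0 := by
      intro k hk
      have h1 : (∑ x : b, ((k x : ℚ) : ℝ) * (x:ℝ)) = 0 := by
        have hmul : (∑ x : b, (k x : ℝ) * μf x) * (D:ℝ) = ∑ x : b, ((k x : ℚ):ℝ) * (x:ℝ) := by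
          rw [Finset.sum_mul]
          apply Finset.sum_congr rfl
          intro x _
          rw [hμf]
          push_cast
          field_simp
        rw [← hmul, hk, zero_mul]
      have h2 : ∀ g : b → ℚ, (∑ x : b, g x • (x:ℝ)) = 0 → ∀ x, g x = 0 :=
        Fintype.linearIndependent_iff.1 hbind
      have h3 := h2 (fun x => (k x : ℚ)) (by
        rw [← h1]
        apply Finset.sum_congr rfl
        intro x _
        rw [Rat.smul_def])
      funext x
      simp only [Pi.zero_apply]
      have h4 : ((k x : ℚ)) = 0 := h3 x
      exact_mod_cast h4
    set C : ℝ := 1 + ∑ i, ∑ x : b, |(a i x : ℝ)| with hCdef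
    have hC0 : 0 < C := by
      rw [hCdef]
      have : (0:ℝ) ≤ ∑ i, ∑ x : b, |(a i x : ℝ)| :=
        Finset.sum_nonneg fun i _ => Finset.sum_nonneg fun x _ => abs_nonneg _
      linarith
    set ε' : ℝ := min (ε / C) (Real.pi / 2) with hε'
    have hε'0 : 0 < ε' := lt_min (by positivity) (by positivity)
    obtain ⟨τ, hτ⟩ := core μf ψ hind hε'0 (min_le_right _ _)
    choose mm hmm using hτ
    refine ⟨τ, fun i => ?_⟩
    refine ⟨∑ x : b, a i x * mm x - w i, ?_⟩
    -- identities
    have hlam : lam i = ∑ x : b, (a i x : ℝ) * μf x := by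
      rw [← hc i]
      apply Finset.sum_congr rfl
      intro x _
      rw [Rat.smul_def, hμf]
      push_cast [hcr i x]
      ring
    -- evaluation lemma for the special rational vector
    set κ : Fin n → ℚ := fun l => (if l = i then (1:ℚ) else 0)
      - ∑ x : b, (if jdx x = l then c i x else 0) with hκdef
    have hEval : ∀ v : Fin n → ℝ, (∑ l, (κ l : ℝ) * v l)
        = v i - ∑ x : b, (c i x : ℝ) * v (jdx x) := by
      intro v
      have hcastκ : ∀ l, ((κ l : ℚ) : ℝ)
          = (if l = i then (1:ℝ) else 0) - ∑ x : b, (if jdx x = l then (c i x : ℝ) else 0) := by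
        intro l
        rw [hκdef]
        push_cast [apply_ite (fun q : ℚ => (q:ℝ))]
        ring
      simp_rw [hcastκ, sub_mul, Finset.sum_sub_distrib]
      congr 1
      · simp only [ite_mul, one_mul, zero_mul]
        rw [Finset.sum_ite_eq' Finset.univ i v]
        simp
      · simp_rw [Finset.sum_mul, ite_mul, zero_mul]
        rw [Finset.sum_comm]
        apply Finset.sum_congr rfl
        intro x _
        rw [Finset.sum_ite_eq Finset.univ (jdx x) (fun l => (c i x : ℝ) * v l)]
        simp
    have hκlam : (∑ l, (κ l : ℝ) * lam l) = 0 := by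
      rw [hEval lam]
      rw [sub_eq_zero, ← hc i]
      apply Finset.sum_congr rfl
      intro x _
      rw [Rat.smul_def, hjdx x]
    have hθ'i : θ' i = ∑ x : b, (a i x : ℝ) * ψ x := by
      have := hratP κ hκlam
      rw [hEval θ'] at this
      rw [sub_eq_zero] at this
      rw [this]
      apply Finset.sum_congr rfl
      intro x _
      rw [hψ, hcr i x]
      ring
    -- final estimate
    have hcastm : ((∑ x : b, a i x * mm x - w i : ℤ) : ℝ)
        = (∑ x : b, (a i x : ℝ) * (mm x : ℝ)) - (w i : ℝ) := by
      push_cast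
      ring
    have h1 : lam i * τ = ∑ x : b, (a i x : ℝ) * (μf x * τ) := by
      rw [hlam, Finset.sum_mul]
      apply Finset.sum_congr rfl
      intro x _
      ring
    have hθsplit : θ i = θ' i + 2*Real.pi*(w i) := by rw [hθ']; ring
    have hkey : lam i * τ - θ i - 2*Real.pi*((∑ x : b, a i x * mm x - w i : ℤ):ℝ)
        = ∑ x : b, (a i x : ℝ) * (μf x * τ - ψ x - 2*Real.pi*(mm x)) := by
      have hexpand : (∑ x : b, (a i x : ℝ) * (μf x * τ - ψ x - 2*Real.pi*(mm x)))
          = (∑ x : b, (a i x : ℝ) * (μf x * τ)) - (∑ x : b, (a i x : ℝ) * ψ x)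
            - 2*Real.pi * (∑ x : b, (a i x : ℝ) * (mm x : ℝ)) := by
        rw [Finset.mul_sum, ← Finset.sum_sub_distrib, ← Finset.sum_sub_distrib]
        apply Finset.sum_congr rfl
        intro x _
        ring
      rw [hexpand, ← hθ'i, hθsplit, hcastm]
      linear_combination h1
    rw [hkey]
    have hbound : |∑ x : b, (a i x : ℝ) * (μf x * τ - ψ x - 2*Real.pi*(mm x))|
        ≤ ∑ x : b, |(a i x : ℝ)| * ε' := by
      refine le_trans (Finset.abs_sum_le_sum_abs _ _) ?_
      apply Finset.sum_le_sum
      intro x _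
      rw [abs_mul]
      exact mul_le_mul_of_nonneg_left (hmm x).le (abs_nonneg _)
    have hb2 : (∑ x : b, |(a i x : ℝ)| * ε') ≤ (C - 1) * ε' := by
      rw [← Finset.sum_mul]
      apply mul_le_mul_of_nonneg_right _ hε'0.le
      rw [hCdef]
      have : (∑ x : b, |(a i x : ℝ)|) ≤ ∑ i', ∑ x : b, |(a i' x : ℝ)| := by
        apply Finset.single_le_sum (f := fun i' => ∑ x : b, |(a i' x : ℝ)|)
          (fun i' _ => Finset.sum_nonneg fun x _ => abs_nonneg _) (Finset.mem_univ i)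
      linarith
    have hb3 : (C - 1) * ε' < C * ε' := by
      apply mul_lt_mul_of_pos_right _ hε'0
      linarith
    have hb4 : C * ε' ≤ ε := by
      have : ε' ≤ ε / C := min_le_left _ _
      calc C * ε' ≤ C * (ε / C) := mul_le_mul_of_nonneg_left this hC0.le
        _ = ε := by field_simp
    calc |∑ x : b, (a i x : ℝ) * (μf x * τ - ψ x - 2*Real.pi*(mm x))|
        ≤ ∑ x : b, |(a i x : ℝ)| * ε' := hbound
      _ ≤ (C - 1) * ε' := hb2
      _ < C * ε' := hb3
      _ ≤ ε := hb4
end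

section
/- Fix μ > 0 and ω ∈ [0,1]^ℕ satisfying the Diophantine condition |(ω,l)| > γ₀ / ∏ᵢ(1 + i^{1+μ}|lᵢ|^{1+μ}) for all nonzero finitely supported integer vectors l. Then for any interval [a,b] ⊆ ℝ and γ > 0 small enough, there exists α ∈ [a,b] such that for every nonzero finitely supported integer vector l and every n ∈ ℤ, |(ω,l)·α/(2π) − n| > γ ∏ᵢ 1/(1 + i^{2+2μ}|lᵢ|^{2+2μ}). Moreover, the Lebesgue measure of the exceptional set of α in [a,b] is O(γ). -/
open Filter MeasureTheory

/-- `(ω, l) = Σᵢ lᵢ ωᵢ` for a finitely supported integer vector `l`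
(indices shifted so that coordinate `i : ℕ` plays the role of `i + 1 ≥ 1`). -/
noncomputable def freq (ω : ℕ → ℝ) (l : ℕ →₀ ℤ) : ℝ :=
  ∑ i ∈ l.support, (l i : ℝ) * ω i

/-- The second Diophantine condition (on `α`) with constants `γ, μ`. -/
def AlphaDio (ω : ℕ → ℝ) (μ γ α : ℝ) : Prop :=
  ∀ l : ℕ →₀ ℤ, l ≠ 0 → ∀ n : ℤ,
    |freq ω l * α / (2 * Real.pi) - n| >
      γ * ∏ i ∈ l.support, (1 + ((i : ℝ) + 1) ^ (2 + 2 * μ) * |(l i : ℝ)| ^ (2 + 2 * μ))⁻¹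

namespace Stmt8Aux

open Finset

/-- per-coordinate factor -/
noncomputable def gg (μ : ℝ) (i : ℕ) (k : ℤ) : ℝ :=
  (1 + ((i : ℝ) + 1) ^ (1 + μ) * |(k : ℝ)| ^ (1 + μ)) *
    (1 + ((i : ℝ) + 1) ^ (2 + 2 * μ) * |(k : ℝ)| ^ (2 + 2 * μ))⁻¹

lemma gg_pos (μ : ℝ) (i : ℕ) (k : ℤ) : 0 < gg μ i k := by
  unfold gg
  have h1 : (0:ℝ) < (i:ℝ) + 1 := by positivity
  positivity

lemma gg_zero (μ : ℝ) (hμ : 0 < μ) (i : ℕ) : gg μ i 0 = 1 := by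
  have h1 : (1:ℝ) + μ ≠ 0 := by linarith
  have h2 : (2:ℝ) + 2*μ ≠ 0 := by linarith
  simp [gg, Real.zero_rpow h1, Real.zero_rpow h2]

lemma rpow_two (μ : ℝ) {y : ℝ} (hy : 0 ≤ y) : y ^ (2 + 2*μ) = (y ^ (1+μ))^2 := by
  rw [← Real.rpow_natCast (y ^ (1+μ)) 2, ← Real.rpow_mul hy]
  norm_num
  ring_nf

lemma gg_le (μ : ℝ) (hμ : 0 < μ) (i : ℕ) {k : ℤ} (hk : k ≠ 0) :
    gg μ i k ≤ 2 * ((((i:ℝ) + 1) ^ (1 + μ))⁻¹ * |(k:ℝ)| ^ (-(1 + μ))) := by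
  have hi0 : (0:ℝ) ≤ (i:ℝ) + 1 := by positivity
  have hk0 : (0:ℝ) ≤ |(k:ℝ)| := abs_nonneg _
  have h1 : (1:ℝ) ≤ ((i:ℝ)+1) ^ (1+μ) :=
    Real.one_le_rpow (by linarith [Nat.cast_nonneg (α := ℝ) i]) (by linarith)
  have hk1 : (1:ℝ) ≤ |(k:ℝ)| := by
    rw [← Int.cast_abs]
    exact_mod_cast Int.one_le_abs hk
  have h2 : (1:ℝ) ≤ |(k:ℝ)| ^ (1+μ) := Real.one_le_rpow hk1 (by linarith)
  set A := ((i:ℝ)+1) ^ (1+μ)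
  set B := |(k:ℝ)| ^ (1+μ)
  have hA : (0:ℝ) < A := by positivity
  have hB : (0:ℝ) < B := by nlinarith
  have hden : ((i:ℝ)+1) ^ (2+2*μ) * |(k:ℝ)| ^ (2+2*μ) = (A*B)^2 := by
    rw [rpow_two μ hi0, rpow_two μ hk0]; ring
  have hx1 : 1 ≤ A * B := by nlinarith
  have hrw : |(k:ℝ)| ^ (-(1+μ)) = B⁻¹ := by
    rw [Real.rpow_neg hk0]
  rw [hrw]
  have key : (1 + A*B) * (1 + (A*B)^2)⁻¹ ≤ 2 * (A⁻¹ * B⁻¹) := by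
    rw [← div_eq_mul_inv]
    have h2' : 2 * (A⁻¹ * B⁻¹) = 2 / (A*B) := by
      field_simp
    rw [h2', div_le_div_iff₀ (by positivity) (by positivity)]
    nlinarith
  calc gg μ i k = (1 + A*B) * (1 + (A*B)^2)⁻¹ := by
        unfold gg
        rw [hden]
    _ ≤ _ := key

/-- summable majorant over ℤ -/
lemma summable_maj (μ : ℝ) (hμ : 0 < μ) (i : ℕ) :
    Summable (fun k : ℤ => 2 * ((((i:ℝ) + 1) ^ (1 + μ))⁻¹ * |(k:ℝ)| ^ (-(1 + μ)))) := by
  have h := Real.summable_abs_int_rpow (b := 1 + μ) (by linarith)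
  exact (h.mul_left (2 * (((i:ℝ) + 1) ^ (1 + μ))⁻¹)).congr fun k => by ring

lemma summable_gg (μ : ℝ) (hμ : 0 < μ) (i : ℕ) :
    Summable (fun k : ℤ => if k = 0 then 0 else gg μ i k) := by
  refine Summable.of_nonneg_of_le (fun k => ?_) (fun k => ?_) (summable_maj μ hμ i)
  · by_cases hk : k = 0
    · simp only [if_pos hk]; exact le_rfl
    · simp only [if_neg hk]; exact le_of_lt (gg_pos _ _ _)
  · by_cases hk : k = 0
    · simp only [if_pos hk]; positivity
    · simp only [if_neg hk]; exact gg_le μ hμ i hk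

noncomputable def cc (μ : ℝ) (i : ℕ) : ℝ := ∑' k : ℤ, (if k = 0 then 0 else gg μ i k)

lemma cc_nonneg (μ : ℝ) (hμ : 0 < μ) (i : ℕ) : 0 ≤ cc μ i := by
  refine tsum_nonneg fun k => ?_
  split <;> [rfl; exact le_of_lt (gg_pos _ _ _)]

noncomputable def ZZ (μ : ℝ) : ℝ := ∑' k : ℤ, |(k:ℝ)| ^ (-(1 + μ))

lemma cc_le (μ : ℝ) (hμ : 0 < μ) (i : ℕ) :
    cc μ i ≤ 2 * (((i:ℝ) + 1) ^ (1 + μ))⁻¹ * ZZ μ := by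
  have h := Summable.tsum_le_tsum (f := fun k : ℤ => if k = 0 then 0 else gg μ i k)
    (g := fun k : ℤ => 2 * ((((i:ℝ) + 1) ^ (1 + μ))⁻¹ * |(k:ℝ)| ^ (-(1 + μ))))
    (fun k => by
      by_cases hk : k = 0
      · simp only [if_pos hk]; positivity
      · simp only [if_neg hk]; exact gg_le μ hμ i hk)
    (summable_gg μ hμ i) (summable_maj μ hμ i)
  calc cc μ i ≤ _ := h
    _ = 2 * (((i:ℝ) + 1) ^ (1 + μ))⁻¹ * ZZ μ := by
        rw [ZZ, ← tsum_mul_left]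
        congr 1
        ext k
        ring

lemma summable_shift (μ : ℝ) (hμ : 0 < μ) :
    Summable (fun i : ℕ => ((((i:ℝ) + 1) ^ (1 + μ))⁻¹ : ℝ)) := by
  have h : Summable (fun n : ℕ => (((n:ℝ) ^ (1 + μ))⁻¹ : ℝ)) := by
    rw [Real.summable_nat_rpow_inv]
    linarith
  have := (summable_nat_add_iff (f := fun n : ℕ => (((n:ℝ) ^ (1 + μ))⁻¹ : ℝ)) 1).mpr h
  refine this.congr fun n => ?_
  push_cast
  ring_nf

noncomputable def TT (μ : ℝ) : ℝ := 2 * ZZ μ * (∑' i : ℕ, (((i:ℝ) + 1) ^ (1 + μ))⁻¹)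

lemma ZZ_nonneg (μ : ℝ) : 0 ≤ ZZ μ := tsum_nonneg fun k => Real.rpow_nonneg (abs_nonneg _) _

lemma sum_cc_le (μ : ℝ) (hμ : 0 < μ) (N : ℕ) : ∑ i ∈ Finset.range N, cc μ i ≤ TT μ := by
  have h1 : ∑ i ∈ Finset.range N, cc μ i
      ≤ ∑ i ∈ Finset.range N, 2 * (((i:ℝ) + 1) ^ (1 + μ))⁻¹ * ZZ μ :=
    Finset.sum_le_sum fun i _ => cc_le μ hμ i
  have h2 : ∑ i ∈ Finset.range N, 2 * (((i:ℝ) + 1) ^ (1 + μ))⁻¹ * ZZ μ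
      = 2 * ZZ μ * ∑ i ∈ Finset.range N, (((i:ℝ) + 1) ^ (1 + μ))⁻¹ := by
    rw [Finset.mul_sum]
    exact Finset.sum_congr rfl fun i _ => by ring
  have h3 : ∑ i ∈ Finset.range N, (((i:ℝ) + 1) ^ (1 + μ))⁻¹
      ≤ ∑' i : ℕ, (((i:ℝ) + 1) ^ (1 + μ))⁻¹ :=
    Summable.sum_le_tsum _ (fun i _ => by positivity) (summable_shift μ hμ)
  have hz := ZZ_nonneg μ
  calc ∑ i ∈ Finset.range N, cc μ i ≤ _ := h1
    _ = _ := h2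
    _ ≤ TT μ := by
        rw [TT]
        have : (0:ℝ) ≤ 2 * ZZ μ := by linarith
        exact mul_le_mul_of_nonneg_left h3 this

noncomputable def KK (μ : ℝ) : ℝ := Real.exp (TT μ)

lemma KK_pos (μ : ℝ) : 0 < KK μ := Real.exp_pos _

lemma prod_le_KK (μ : ℝ) (hμ : 0 < μ) (N : ℕ) :
    ∏ i ∈ Finset.range N, (1 + cc μ i) ≤ KK μ := by
  have h1 : ∏ i ∈ Finset.range N, (1 + cc μ i) ≤ ∏ i ∈ Finset.range N, Real.exp (cc μ i) := by
    refine Finset.prod_le_prod (fun i _ => by linarith [cc_nonneg μ hμ i]) ?_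
    intro i _
    linarith [Real.add_one_le_exp (cc μ i)]
  rw [← Real.exp_sum] at h1
  exact h1.trans (Real.exp_le_exp.mpr (sum_cc_le μ hμ N))

noncomputable def FF (μ : ℝ) (l : ℕ →₀ ℤ) : ℝ := ∏ i ∈ l.support, gg μ i (l i)

lemma FF_pos (μ : ℝ) (l : ℕ →₀ ℤ) : 0 < FF μ l :=
  Finset.prod_pos fun i _ => gg_pos μ i (l i)

lemma sum_gg_le (μ : ℝ) (hμ : 0 < μ) (N : ℕ) (s : Finset ℤ) :
    ∑ k ∈ s, gg μ N k ≤ 1 + cc μ N := by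
  have core : ∀ t : Finset ℤ, (0:ℤ) ∉ t → ∑ k ∈ t, gg μ N k ≤ cc μ N := by
    intro t ht
    have : ∑ k ∈ t, gg μ N k = ∑ k ∈ t, (if k = 0 then 0 else gg μ N k) := by
      refine Finset.sum_congr rfl fun k hk => ?_
      rw [if_neg (fun h : k = 0 => ht (h ▸ hk))]
    rw [this]
    exact Summable.sum_le_tsum t (fun k _ => by
      split <;> [rfl; exact le_of_lt (gg_pos _ _ _)]) (summable_gg μ hμ N)
  by_cases h0 : (0:ℤ) ∈ s
  · rw [← Finset.sum_erase_add s _ h0, gg_zero μ hμ N]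
    have := core (s.erase 0) (Finset.notMem_erase 0 s)
    linarith
  · have := core s h0
    linarith [cc_nonneg μ hμ N]

lemma FF_erase (μ : ℝ) (hμ : 0 < μ) (N : ℕ) (l : ℕ →₀ ℤ) :
    FF μ l = FF μ (l.erase N) * gg μ N (l N) := by
  classical
  by_cases hN : N ∈ l.support
  · have hsupp : (l.erase N).support = l.support.erase N := Finsupp.support_erase
    rw [FF, ← Finset.prod_erase_mul _ _ hN, FF, hsupp]
    congr 1
    refine Finset.prod_congr rfl fun i hi => ?_
    rw [Finsupp.erase_ne (Finset.ne_of_mem_erase hi)]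
  · have h0 : l N = 0 := Finsupp.notMem_support_iff.mp hN
    rw [h0, gg_zero μ hμ N, mul_one, Finsupp.erase_of_notMem_support hN]

lemma key (μ : ℝ) (hμ : 0 < μ) : ∀ N : ℕ, ∀ u : Finset (ℕ →₀ ℤ),
    (∀ l ∈ u, l.support ⊆ Finset.range N) →
    ∑ l ∈ u, FF μ l ≤ ∏ i ∈ Finset.range N, (1 + cc μ i) := by
  classical
  intro N
  induction N with
  | zero =>
    intro u hu
    have : u ⊆ {0} := by
      intro l hl
      have := hu l hl
      simp only [Finset.range_zero, Finset.subset_empty] at this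
      simp [Finset.mem_singleton, ← Finsupp.support_eq_empty, this]
    rcases Finset.subset_singleton_iff.mp this with rfl | rfl
    · simp
    · simp [FF]
  | succ N ih =>
    intro u hu
    set φ : (ℕ →₀ ℤ) → (ℕ →₀ ℤ) := fun l => l.erase N with hφ
    have maps : ∀ l ∈ u, φ l ∈ u.image φ := fun l hl => Finset.mem_image_of_mem _ hl
    rw [← Finset.sum_fiberwise_of_maps_to maps (FF μ)]
    have inner : ∀ j ∈ u.image φ,
        ∑ l ∈ u.filter (fun l => φ l = j), FF μ l ≤ FF μ j * (1 + cc μ N) := by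
      intro j hj
      have hfib : ∀ l ∈ u.filter (fun l => φ l = j), FF μ l = FF μ j * gg μ N (l N) := by
        intro l hl
        obtain ⟨-, hl2⟩ := Finset.mem_filter.mp hl
        have hl2' : l.erase N = j := hl2
        rw [FF_erase μ hμ N l, hl2']
      rw [Finset.sum_congr rfl hfib, ← Finset.mul_sum]
      have inj : ∀ l₁ ∈ u.filter (fun l => φ l = j), ∀ l₂ ∈ u.filter (fun l => φ l = j),
          l₁ N = l₂ N → l₁ = l₂ := by
        intro l₁ h₁ l₂ h₂ hN
        obtain ⟨-, h₁⟩ := Finset.mem_filter.mp h₁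
        obtain ⟨-, h₂⟩ := Finset.mem_filter.mp h₂
        ext i
        by_cases hi : i = N
        · rw [hi]; exact hN
        · have h₁' : l₁.erase N = j := h₁
          have h₂' : l₂.erase N = j := h₂
          have e1 : l₁.erase N i = l₂.erase N i := by rw [h₁', h₂']
          rwa [Finsupp.erase_ne hi, Finsupp.erase_ne hi] at e1
      have himg : ∑ l ∈ u.filter (fun l => φ l = j), gg μ N (l N)
          = ∑ k ∈ (u.filter (fun l => φ l = j)).image (fun l => l N), gg μ N k :=
        (Finset.sum_image inj).symm
      rw [himg]
      exact mul_le_mul_of_nonneg_left (sum_gg_le μ hμ N _) (le_of_lt (FF_pos μ j))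
    calc ∑ j ∈ u.image φ, ∑ l ∈ u.filter (fun l => φ l = j), FF μ l
        ≤ ∑ j ∈ u.image φ, FF μ j * (1 + cc μ N) := Finset.sum_le_sum inner
      _ = (∑ j ∈ u.image φ, FF μ j) * (1 + cc μ N) := by rw [Finset.sum_mul]
      _ ≤ (∏ i ∈ Finset.range N, (1 + cc μ i)) * (1 + cc μ N) := by
          refine mul_le_mul_of_nonneg_right ?_ (by linarith [cc_nonneg μ hμ N])
          refine ih (u.image φ) ?_
          intro j hj
          obtain ⟨l, hl, rfl⟩ := Finset.mem_image.mp hj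
          intro i hi
          rw [hφ, Finsupp.support_erase] at hi
          have hiN : i ≠ N := Finset.ne_of_mem_erase hi
          have : i ∈ l.support := Finset.mem_of_mem_erase hi
          have := hu l hl this
          rw [Finset.mem_range] at this ⊢
          omega
      _ = ∏ i ∈ Finset.range (N+1), (1 + cc μ i) := (Finset.prod_range_succ _ _).symm

lemma sum_FF_le (μ : ℝ) (hμ : 0 < μ) (u : Finset (ℕ →₀ ℤ)) :
    ∑ l ∈ u, FF μ l ≤ KK μ := by
  classical
  set N := (u.sup fun l => l.support.sup id) + 1 with hN
  have hu : ∀ l ∈ u, l.support ⊆ Finset.range N := by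
    intro l hl i hi
    have h1 : i ≤ l.support.sup id := Finset.le_sup (f := id) hi
    have h2 : l.support.sup id ≤ u.sup fun l => l.support.sup id :=
      Finset.le_sup (f := fun l => l.support.sup id) hl
    rw [Finset.mem_range]
    omega
  exact (key μ hμ N u hu).trans (prod_le_KK μ hμ N)

lemma tsum_FF_le (μ : ℝ) (hμ : 0 < μ) :
    ∑' l : ℕ →₀ ℤ, ENNReal.ofReal (FF μ l) ≤ ENNReal.ofReal (KK μ) := by
  rw [ENNReal.tsum_eq_iSup_sum]
  refine iSup_le fun u => ?_
  rw [← ENNReal.ofReal_sum_of_nonneg (fun l _ => le_of_lt (FF_pos μ l))]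
  exact ENNReal.ofReal_le_ofReal (sum_FF_le μ hμ u)

noncomputable def PP (μ : ℝ) (l : ℕ →₀ ℤ) : ℝ :=
  ∏ i ∈ l.support, (1 + ((i : ℝ) + 1) ^ (2 + 2 * μ) * |(l i : ℝ)| ^ (2 + 2 * μ))⁻¹

noncomputable def QQ (μ : ℝ) (l : ℕ →₀ ℤ) : ℝ :=
  ∏ i ∈ l.support, (1 + ((i : ℝ) + 1) ^ (1 + μ) * |(l i : ℝ)| ^ (1 + μ))

lemma PP_pos (μ : ℝ) (l : ℕ →₀ ℤ) : 0 < PP μ l :=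
  Finset.prod_pos fun i _ => by positivity

lemma PP_le_one (μ : ℝ) (l : ℕ →₀ ℤ) : PP μ l ≤ 1 := by
  refine Finset.prod_le_one (fun i _ => by positivity) (fun i _ => ?_)
  have h : (1:ℝ) ≤ 1 + ((i : ℝ) + 1) ^ (2 + 2 * μ) * |(l i : ℝ)| ^ (2 + 2 * μ) :=
    le_add_of_nonneg_right (by positivity)
  have h0 : (0:ℝ) < 1 + ((i : ℝ) + 1) ^ (2 + 2 * μ) * |(l i : ℝ)| ^ (2 + 2 * μ) := by positivity
  rw [inv_le_one_iff₀]
  right; exact h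

lemma one_le_QQ (μ : ℝ) (l : ℕ →₀ ℤ) : 1 ≤ QQ μ l := by
  rw [QQ]
  have h := Finset.prod_le_prod (s := l.support) (f := fun _ => (1:ℝ))
    (g := fun i : ℕ => 1 + ((i : ℝ) + 1) ^ (1 + μ) * |(l i : ℝ)| ^ (1 + μ))
    (fun i _ => zero_le_one) (fun i _ => le_add_of_nonneg_right (by positivity))
  simpa using h

lemma QQ_pos (μ : ℝ) (l : ℕ →₀ ℤ) : 0 < QQ μ l := lt_of_lt_of_le one_pos (one_le_QQ μ l)

lemma FF_eq (μ : ℝ) (l : ℕ →₀ ℤ) : FF μ l = QQ μ l * PP μ l := by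
  rw [FF, QQ, PP, ← Finset.prod_mul_distrib]
  exact Finset.prod_congr rfl fun i _ => rfl

def BB (ω : ℕ → ℝ) (μ γ a b : ℝ) (l : ℕ →₀ ℤ) (n : ℤ) : Set ℝ :=
  {α : ℝ | α ∈ Set.Icc a b ∧ l ≠ 0 ∧
    |freq ω l * α / (2 * Real.pi) - n| ≤ γ * PP μ l}

set_option maxHeartbeats 1000000 in
lemma main_small (μ γ₀ : ℝ) (hμ : 0 < μ) (hγ₀ : 0 < γ₀) (ω : ℕ → ℝ)
    (hdio : ∀ l : ℕ →₀ ℤ, l ≠ 0 → |freq ω l| > γ₀ / QQ μ l)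
    (a b : ℝ) (hab : a < b) (γ : ℝ) (hγ : 0 < γ) (hγ2 : γ ≤ 1/2) :
    volume {α ∈ Set.Icc a b | ¬ AlphaDio ω μ γ α}
      ≤ ENNReal.ofReal ((2*(b-a) + 8*Real.pi/γ₀) * KK μ * γ) := by
  classical
  have hπ : (0:ℝ) < Real.pi := Real.pi_pos
  have h2π : (0:ℝ) < 2 * Real.pi := by positivity
  set D : ℝ := 2*(b-a) + 8*Real.pi/γ₀ with hD
  have hDpos : 0 < D := by
    have : 0 < 8*Real.pi/γ₀ := by positivity
    rw [hD]; nlinarith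
  have hsub : {α ∈ Set.Icc a b | ¬ AlphaDio ω μ γ α} ⊆ ⋃ l : ℕ →₀ ℤ, ⋃ n : ℤ, BB ω μ γ a b l n := by
    rintro α ⟨hα, hnd⟩
    unfold AlphaDio at hnd
    push_neg at hnd
    obtain ⟨l, hl, n, hn⟩ := hnd
    exact Set.mem_iUnion.mpr ⟨l, Set.mem_iUnion.mpr ⟨n, ⟨hα, hl, hn⟩⟩⟩
  have h1 : volume {α ∈ Set.Icc a b | ¬ AlphaDio ω μ γ α}
      ≤ ∑' l : ℕ →₀ ℤ, ∑' n : ℤ, volume (BB ω μ γ a b l n) :=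
    (measure_mono hsub).trans ((measure_iUnion_le _).trans
      (ENNReal.tsum_le_tsum fun l => measure_iUnion_le _))
  have per : ∀ l : ℕ →₀ ℤ, ∑' n : ℤ, volume (BB ω μ γ a b l n) ≤ ENNReal.ofReal (γ * D * FF μ l) := by
    intro l
    by_cases hl : l = 0
    · have hBe : ∀ n : ℤ, BB ω μ γ a b l n = ∅ := by
        intro n
        rw [Set.eq_empty_iff_forall_notMem]
        rintro α ⟨-, hl', -⟩
        exact hl' hl
      simp only [hBe, measure_empty, tsum_zero]
      exact zero_le
    · have hQ := one_le_QQ μ l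
      have hQpos := QQ_pos μ l
      have hP := PP_pos μ l
      have hP1 := PP_le_one μ l
      have hfl : γ₀ / QQ μ l < |freq ω l| := hdio l hl
      have hfpos : 0 < |freq ω l| := lt_trans (by positivity) hfl
      have hfne : freq ω l ≠ 0 := abs_pos.mp hfpos
      have hrpos : 0 < γ * PP μ l := mul_pos hγ hP
      have hrγ : γ * PP μ l ≤ γ := by nlinarith
      set mm : ℝ := min (freq ω l * a) (freq ω l * b) / (2 * Real.pi) with hmm
      set MM : ℝ := max (freq ω l * a) (freq ω l * b) / (2 * Real.pi) with hMM
      have hmmMM : MM - mm = |freq ω l| * (b - a) / (2 * Real.pi) := by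
        have h2 : |freq ω l * b - freq ω l * a| = |freq ω l| * (b - a) := by
          rw [show freq ω l * b - freq ω l * a = freq ω l * (b - a) by ring, abs_mul,
            abs_of_nonneg (by linarith : (0:ℝ) ≤ b - a)]
        rw [hMM, hmm, div_sub_div_same, max_sub_min_eq_abs, h2]
      have hball : ∀ n : ℤ, BB ω μ γ a b l n ⊆
          Metric.closedBall ((2 * Real.pi * n) / freq ω l)
            (2 * Real.pi * (γ * PP μ l) / |freq ω l|) := by
        intro n α hα
        obtain ⟨-, -, hn⟩ := hα
        rw [Metric.mem_closedBall, Real.dist_eq]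
        have e : α - 2 * Real.pi * n / freq ω l
            = (2 * Real.pi) * (freq ω l * α / (2 * Real.pi) - n) / freq ω l := by
          field_simp
        rw [e, abs_div, abs_mul, abs_of_pos h2π]
        gcongr
      have hvol : ∀ n : ℤ, volume (BB ω μ γ a b l n)
          ≤ ENNReal.ofReal (2 * (2 * Real.pi * (γ * PP μ l) / |freq ω l|)) := fun n =>
        le_trans (measure_mono (hball n)) (le_of_eq (Real.volume_closedBall _ _))
      set n₀ : ℤ := ⌈mm - γ * PP μ l⌉ with hn₀
      set n₁ : ℤ := ⌊MM + γ * PP μ l⌋ with hn₁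
      have hempty : ∀ n : ℤ, n ∉ Finset.Icc n₀ n₁ → BB ω μ γ a b l n = ∅ := by
        intro n hn
        rw [Set.eq_empty_iff_forall_notMem]
        rintro α ⟨hab', -, habs⟩
        apply hn
        rw [Finset.mem_Icc]
        have hfa : min (freq ω l * a) (freq ω l * b) ≤ freq ω l * α
            ∧ freq ω l * α ≤ max (freq ω l * a) (freq ω l * b) := by
          rcases le_total 0 (freq ω l) with hf0 | hf0
          · exact ⟨le_trans (min_le_left _ _) (mul_le_mul_of_nonneg_left hab'.1 hf0),
              le_trans (mul_le_mul_of_nonneg_left hab'.2 hf0) (le_max_right _ _)⟩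
          · exact ⟨le_trans (min_le_right _ _) (mul_le_mul_of_nonpos_left hab'.2 hf0),
              le_trans (mul_le_mul_of_nonpos_left hab'.1 hf0) (le_max_left _ _)⟩
        have hm : mm ≤ freq ω l * α / (2 * Real.pi) := by
          rw [hmm]; gcongr <;> first | exact hfa.1 | exact hfa.2
        have hM : freq ω l * α / (2 * Real.pi) ≤ MM := by
          rw [hMM]; gcongr <;> first | exact hfa.1 | exact hfa.2
        have habs' := abs_le.mp habs
        constructor
        · rw [hn₀]; exact Int.ceil_le.mpr (by linarith [habs'.2])
        · rw [hn₁]; exact Int.le_floor.mpr (by linarith [habs'.1])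
      have htsum : ∑' n : ℤ, volume (BB ω μ γ a b l n) = ∑ n ∈ Finset.Icc n₀ n₁, volume (BB ω μ γ a b l n) :=
        tsum_eq_sum (fun n hn => by rw [hempty n hn]; exact measure_empty)
      have hcard : ((Finset.Icc n₀ n₁).card : ℝ) ≤ |freq ω l| * (b - a) / (2 * Real.pi) + 2 := by
        have hba : (0:ℝ) ≤ |freq ω l| * (b - a) := mul_nonneg (abs_nonneg _) (by linarith)
        have hba' : (0:ℝ) ≤ |freq ω l| * (b - a) / (2 * Real.pi) := div_nonneg hba (by positivity)
        rcases le_or_gt n₀ n₁ with hle | hlt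
        · have hcc : (Finset.Icc n₀ n₁).card = (n₁ + 1 - n₀).toNat := Int.card_Icc _ _
          have hge : (0:ℤ) ≤ n₁ + 1 - n₀ := by omega
          have hc : ((Finset.Icc n₀ n₁).card : ℝ) = (n₁ : ℝ) + 1 - (n₀ : ℝ) := by
            rw [hcc]
            rw_mod_cast [Int.toNat_of_nonneg hge]
            try push_cast
            try ring
          have hfl1 : (n₁ : ℝ) ≤ MM + γ * PP μ l := by rw [hn₁]; exact Int.floor_le _
          have hfl2 : mm - γ * PP μ l ≤ (n₀ : ℝ) := by rw [hn₀]; exact Int.le_ceil _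
          have h2r : 2 * (γ * PP μ l) + 1 ≤ 2 := by nlinarith
          rw [hc]
          have := hmmMM
          linarith
        · rw [Finset.Icc_eq_empty_of_lt hlt]
          simp only [Finset.card_empty, Nat.cast_zero]
          linarith
      have hreal : ((Finset.Icc n₀ n₁).card : ℝ) * (2 * (2 * Real.pi * (γ * PP μ l) / |freq ω l|))
          ≤ γ * D * FF μ l := by
        have hfac : (0:ℝ) ≤ 2 * (2 * Real.pi * (γ * PP μ l) / |freq ω l|) := by positivity
        have step1 : ((Finset.Icc n₀ n₁).card : ℝ)
              * (2 * (2 * Real.pi * (γ * PP μ l) / |freq ω l|))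
            ≤ (|freq ω l| * (b - a) / (2 * Real.pi) + 2)
              * (2 * (2 * Real.pi * (γ * PP μ l) / |freq ω l|)) :=
          mul_le_mul_of_nonneg_right hcard hfac
        have E1 : (|freq ω l| * (b - a) / (2 * Real.pi) + 2)
              * (2 * (2 * Real.pi * (γ * PP μ l) / |freq ω l|))
            = 2 * (γ * PP μ l) * (b - a) + 8 * Real.pi * (γ * PP μ l) / |freq ω l| := by
          field_simp
          ring
        have hγ₀Q : γ₀ < |freq ω l| * QQ μ l := by
          rw [div_lt_iff₀ hQpos] at hfl
          linarith
        have E2 : 8 * Real.pi * (γ * PP μ l) / |freq ω l|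
            ≤ 8 * Real.pi * (γ * PP μ l) * QQ μ l / γ₀ := by
          rw [div_le_div_iff₀ hfpos hγ₀]
          nlinarith [mul_pos (mul_pos (by positivity : (0:ℝ) < 8 * Real.pi) hrpos) hQpos]
        have hPQ : PP μ l ≤ PP μ l * QQ μ l := by nlinarith
        have E3 : 2 * (γ * PP μ l) * (b - a) + 8 * Real.pi * (γ * PP μ l) * QQ μ l / γ₀
            ≤ γ * D * FF μ l := by
          rw [FF_eq, hD]
          have hkey : (0:ℝ) ≤ 2 * (b - a) * γ * (PP μ l * QQ μ l - PP μ l) :=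
            mul_nonneg (mul_nonneg (by linarith : (0:ℝ) ≤ 2 * (b - a)) hγ.le)
              (sub_nonneg.mpr hPQ)
          have expand : γ * (2 * (b - a) + 8 * Real.pi / γ₀) * (QQ μ l * PP μ l)
              = 2 * (γ * PP μ l) * (b - a) + 8 * Real.pi * (γ * PP μ l) * QQ μ l / γ₀
                + 2 * (b - a) * γ * (PP μ l * QQ μ l - PP μ l) := by
            ring
          rw [expand]
          linarith
        calc _ ≤ _ := step1
          _ = _ := E1
          _ ≤ 2 * (γ * PP μ l) * (b - a) + 8 * Real.pi * (γ * PP μ l) * QQ μ l / γ₀ := by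
              linarith
          _ ≤ _ := E3
      calc ∑' n : ℤ, volume (BB ω μ γ a b l n) = ∑ n ∈ Finset.Icc n₀ n₁, volume (BB ω μ γ a b l n) := htsum
        _ ≤ ∑ n ∈ Finset.Icc n₀ n₁,
            ENNReal.ofReal (2 * (2 * Real.pi * (γ * PP μ l) / |freq ω l|)) :=
          Finset.sum_le_sum fun n _ => hvol n
        _ = (Finset.Icc n₀ n₁).card •
            ENNReal.ofReal (2 * (2 * Real.pi * (γ * PP μ l) / |freq ω l|)) := by
          rw [Finset.sum_const]
        _ = ENNReal.ofReal (((Finset.Icc n₀ n₁).card : ℝ)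
            * (2 * (2 * Real.pi * (γ * PP μ l) / |freq ω l|))) := by
          rw [nsmul_eq_mul, ← ENNReal.ofReal_natCast, ← ENNReal.ofReal_mul (by positivity)]
        _ ≤ ENNReal.ofReal (γ * D * FF μ l) := ENNReal.ofReal_le_ofReal hreal
  have hγD : (0:ℝ) ≤ γ * D := mul_nonneg hγ.le hDpos.le
  calc volume {α ∈ Set.Icc a b | ¬ AlphaDio ω μ γ α}
      ≤ ∑' l : ℕ →₀ ℤ, ∑' n : ℤ, volume (BB ω μ γ a b l n) := h1
    _ ≤ ∑' l : ℕ →₀ ℤ, ENNReal.ofReal (γ * D) * ENNReal.ofReal (FF μ l) := by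
        refine ENNReal.tsum_le_tsum fun l => (per l).trans (le_of_eq ?_)
        rw [← ENNReal.ofReal_mul hγD]
    _ = ENNReal.ofReal (γ * D) * ∑' l : ℕ →₀ ℤ, ENNReal.ofReal (FF μ l) :=
        ENNReal.tsum_mul_left
    _ ≤ ENNReal.ofReal (γ * D) * ENNReal.ofReal (KK μ) :=
        mul_le_mul_right (tsum_FF_le μ hμ) _
    _ = ENNReal.ofReal (D * KK μ * γ) := by
        rw [← ENNReal.ofReal_mul hγD]
        congr 1
        ring

end Stmt8Aux

set_option maxHeartbeats 1000000

/-- Given a Diophantine frequency vector `ω`, for any interval `[a,b]` and `γ`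
small enough there exists `α ∈ [a,b]` satisfying the second Diophantine
condition; the exceptional set has Lebesgue measure `O(γ)`. -/
theorem stmt_8 (μ γ₀ : ℝ) (hμ : 0 < μ) (hγ₀ : 0 < γ₀) (ω : ℕ → ℝ)
    (hω : ∀ i, ω i ∈ Set.Icc (0:ℝ) 1)
    (hdio : ∀ l : ℕ →₀ ℤ, l ≠ 0 →
      |freq ω l| > γ₀ / ∏ i ∈ l.support,
        (1 + ((i : ℝ) + 1) ^ (1 + μ) * |(l i : ℝ)| ^ (1 + μ)))
    (a b : ℝ) (hab : a < b) :
    (∃ C > (0:ℝ), ∀ γ : ℝ, 0 < γ →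
        volume {α ∈ Set.Icc a b | ¬ AlphaDio ω μ γ α} ≤ ENNReal.ofReal (C * γ)) ∧
      ∃ γ₁ > (0:ℝ), ∀ γ : ℝ, 0 < γ → γ < γ₁ →
        ∃ α ∈ Set.Icc a b, AlphaDio ω μ γ α := by
    classical
  have hπ := Real.pi_pos
  set D : ℝ := 2*(b-a) + 8*Real.pi/γ₀ with hD
  set C : ℝ := D * Stmt8Aux.KK μ + 2*(b-a) with hC
  have hKK := Stmt8Aux.KK_pos μ
  have hDpos : 0 < D := by
    have h8 : 0 < 8*Real.pi/γ₀ := by positivity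
    rw [hD]; nlinarith
  have hCpos : 0 < C := by
    rw [hC]; nlinarith [mul_pos hDpos hKK]
  have hdio' : ∀ l : ℕ →₀ ℤ, l ≠ 0 → |freq ω l| > γ₀ / Stmt8Aux.QQ μ l := fun l hl => hdio l hl
  have part1 : ∀ γ : ℝ, 0 < γ →
      volume {α ∈ Set.Icc a b | ¬ AlphaDio ω μ γ α} ≤ ENNReal.ofReal (C * γ) := by
    intro γ hγ
    by_cases hhalf : γ ≤ 1/2
    · refine (Stmt8Aux.main_small μ γ₀ hμ hγ₀ ω hdio' a b hab γ hγ hhalf).trans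
        (ENNReal.ofReal_le_ofReal ?_)
      rw [hC]
      nlinarith [mul_pos hγ (by linarith : (0:ℝ) < b - a), mul_pos hDpos hKK]
    · push_neg at hhalf
      refine (measure_mono (Set.sep_subset _ _)).trans ?_
      rw [Real.volume_Icc]
      refine ENNReal.ofReal_le_ofReal ?_
      rw [hC]
      nlinarith [mul_pos hDpos hKK, mul_pos (mul_pos hDpos hKK) hγ,
        mul_pos (by linarith : (0:ℝ) < 2*γ - 1) (by linarith : (0:ℝ) < b - a)]
  refine ⟨⟨C, hCpos, part1⟩, ⟨min (1/2) ((b-a)/(2*C)), ?_, ?_⟩⟩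
  · exact lt_min (by norm_num) (div_pos (by linarith) (by linarith))
  · intro γ hγ hγ1
    by_contra hcon
    push_neg at hcon
    have hsub : Set.Icc a b ⊆ {α ∈ Set.Icc a b | ¬ AlphaDio ω μ γ α} :=
      fun α hα => ⟨hα, hcon α hα⟩
    have h1 : ENNReal.ofReal (b - a) ≤ ENNReal.ofReal (C * γ) := by
      calc ENNReal.ofReal (b-a) = volume (Set.Icc a b) := (Real.volume_Icc).symm
        _ ≤ volume {α ∈ Set.Icc a b | ¬ AlphaDio ω μ γ α} := measure_mono hsub
        _ ≤ _ := part1 γ hγ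
    have h2 : b - a ≤ C * γ :=
      (ENNReal.ofReal_le_ofReal_iff (mul_nonneg hCpos.le hγ.le)).mp h1
    have h3 : γ < (b-a)/(2*C) := lt_of_lt_of_le hγ1 (min_le_right _ _)
    have h4 : C * γ < (b-a)/2 := by
      rw [lt_div_iff₀ (by linarith : (0:ℝ) < 2*C)] at h3
      nlinarith
    have h5 : b - a < (b - a)/2 := lt_of_le_of_lt h2 h4
    linarith
end

section
/- Small divisor lemma: let ω satisfy the Diophantine condition |(ω,l)| > γ₀/∏ᵢ(1+i^{1+μ}|lᵢ|^{1+μ}) and let α satisfy |(ω,l)α/(2π) − n| > γ ∏ᵢ 1/(1+i^{2+2μ}|lᵢ|^{2+2μ}) for all nonzero finitely supported l and n ∈ ℤ. Suppose h ∈ AP_r(ω) has zero mean value. Then for every 0 < r' < r with δ = r − r' small enough, the difference equation s(x+α) − s(x) = h(x) has a unique solution s ∈ AP_{r'}(ω) with zero mean value, and ‖s‖_{r'} ≤ γ^{-1} ‖h‖_r e^{δ^{-2}}. -/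
open Filter Complex

/-- `‖l‖ = Σᵢ i|lᵢ|` (indices shifted: coordinate `i : ℕ` plays the role of `i+1`). -/
noncomputable def wnorm (l : ℕ →₀ ℤ) : ℝ :=
  ∑ i ∈ l.support, ((i : ℝ) + 1) * |(l i : ℝ)|

private lemma amgm4 (u v : ℝ) (hu : 0 ≤ u) (hv : 0 ≤ v) :
    4 * u * v ^ 3 ≤ u ^ 4 + 3 * v ^ 4 := by
  nlinarith [sq_nonneg (u - v), mul_nonneg (sq_nonneg (u - v))
    (add_nonneg (add_nonneg (sq_nonneg u) (by positivity : (0:ℝ) ≤ 2 * u * v)) (sq_nonneg v)),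
    sq_nonneg (u + v), mul_nonneg hu hv]

private lemma log_le_quarter (x : ℝ) (hx : 1 ≤ x) :
    Real.log x ≤ 4 * x ^ ((1:ℝ)/4) := by
  have hx0 : 0 < x := lt_of_lt_of_le one_pos hx
  have h1 : Real.log (x ^ ((1:ℝ)/4)) ≤ x ^ ((1:ℝ)/4) - 1 :=
    Real.log_le_sub_one_of_pos (Real.rpow_pos_of_pos hx0 _)
  rw [Real.log_rpow hx0] at h1
  nlinarith

private lemma quarter_le (t β : ℝ) (ht : 0 ≤ t) (hβ : 0 < β) :
    4 * t ^ ((1:ℝ)/4) * β ^ 3 ≤ t + 3 * β ^ 4 := by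
  have hu : 0 ≤ t ^ ((1:ℝ)/4) := Real.rpow_nonneg ht _
  have h4 : (t ^ ((1:ℝ)/4)) ^ (4:ℕ) = t := by
    rw [← Real.rpow_natCast (t ^ ((1:ℝ)/4)) 4, ← Real.rpow_mul ht]
    norm_num
  have := amgm4 (t ^ ((1:ℝ)/4)) β hu hβ.le
  nlinarith [this]

private lemma factor_le (a t β : ℝ) (ha : 1 ≤ a) (ht : 1 ≤ t) (hβ : 0 < β) :
    1 + t ^ a ≤ Real.exp (Real.log 2 + a * t / β ^ 3 + 3 * a * β) := by
  have ht0 : 0 < t := lt_of_lt_of_le one_pos ht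
  have ha0 : (0:ℝ) ≤ a := by linarith
  have hβ3 : (0:ℝ) < β ^ 3 := by positivity
  have h1 : (1:ℝ) ≤ t ^ a := Real.one_le_rpow ht (by linarith)
  have hl := log_le_quarter t ht
  have hq := quarter_le t β ht0.le hβ
  have h6 : a * Real.log t * β ^ 3 ≤ a * t + 3 * a * β ^ 4 := by
    have h6a : a * Real.log t ≤ a * (4 * t ^ ((1:ℝ)/4)) :=
      mul_le_mul_of_nonneg_left hl ha0
    have h6b : a * Real.log t * β ^ 3 ≤ a * (4 * t ^ ((1:ℝ)/4)) * β ^ 3 :=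
      mul_le_mul_of_nonneg_right h6a hβ3.le
    have h6d : a * (4 * t ^ ((1:ℝ)/4) * β ^ 3) ≤ a * (t + 3 * β ^ 4) :=
      mul_le_mul_of_nonneg_left hq ha0
    nlinarith
  have key : a * Real.log t ≤ a * t / β ^ 3 + 3 * a * β := by
    rw [div_add' _ _ _ (ne_of_gt hβ3), le_div_iff₀ hβ3]
    nlinarith
  have h3 : (2:ℝ) * t ^ a = Real.exp (Real.log 2 + a * Real.log t) := by
    rw [Real.rpow_def_of_pos ht0, Real.exp_add, Real.exp_log two_pos, mul_comm (Real.log t) a]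
  calc 1 + t ^ a ≤ 2 * t ^ a := by linarith
    _ = Real.exp (Real.log 2 + a * Real.log t) := h3
    _ ≤ Real.exp (Real.log 2 + a * t / β ^ 3 + 3 * a * β) := by
        apply Real.exp_le_exp.mpr; linarith

private lemma final_arith (K η δ B : ℝ) (hK1 : 1 ≤ K) (hη0 : 0 < η) (hη1 : η ≤ 1)
    (hηK : η ≤ 1/(3*K^2)) (hη3 : η^(3:ℕ) = δ) (hB0 : 0 < B) (hBη : B*η ≤ K) :
    (2*B/δ + 1) * B ≤ (δ^2)⁻¹ := by
  have hδ0 : 0 < δ := by rw [← hη3]; positivity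
  have hδ2 : (0:ℝ) < δ^2 := by positivity
  rw [inv_eq_one_div, le_div_iff₀ hδ2]
  have hexp : (2*B/δ + 1) * B * δ^2 = 2*B^2*δ + B*δ^2 := by field_simp
  rw [hexp]
  have hK2pos : (0:ℝ) < 3*K^2 := by nlinarith
  have hBηnn : (0:ℝ) ≤ B*η := by positivity
  have e2 : (B*η)^2 ≤ K^2 := by
    nlinarith [mul_nonneg (sub_nonneg.mpr hBη) (add_nonneg (by linarith : (0:ℝ) ≤ K) hBηnn)]
  have hη2 : η^2 ≤ 1 := by nlinarith
  have hη4 : η^4 ≤ 1 := by nlinarith [sq_nonneg η]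
  have e3 : η^5 ≤ η := by nlinarith [mul_nonneg hη0.le (sub_nonneg.mpr hη4)]
  have hkey : 2*B^2*δ + B*δ^2 = 2*(B*η)^2*η + (B*η)*η^5 := by rw [← hη3]; ring
  rw [hkey]
  have e4 : 2*(B*η)^2*η ≤ 2*K^2*η := by nlinarith
  have e5 : (B*η)*η^5 ≤ K*η := by
    nlinarith [mul_le_mul_of_nonneg_right hBη (pow_nonneg hη0.le 5),
      mul_le_mul_of_nonneg_left e3 (by linarith : (0:ℝ) ≤ K)]
  have e6 : 3*K^2*η ≤ 1 := by
    have h7 := mul_le_mul_of_nonneg_left hηK hK2pos.le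
    have heq : 3*K^2 * (1/(3*K^2)) = 1 := by field_simp
    nlinarith
  nlinarith

private lemma excess_sum (δ B : ℝ) (hδ0 : 0 < δ) (hB0 : 0 < B)
    (hfin : (2*B/δ + 1) * B ≤ (δ^2)⁻¹) (L : Finset ℕ) :
    (∑ i ∈ L, max 0 (B - δ/2 * ((i:ℝ)+1))) ≤ (δ^2)⁻¹ := by
  classical
  set N : ℕ := ⌈2*B/δ⌉₊ with hN_def
  have hf0 : ∀ i ∉ Finset.range N, max 0 (B - δ/2 * ((i:ℝ)+1)) = 0 := by
    intro i hi
    rw [Finset.mem_range, not_lt] at hi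
    have h1 : (2*B/δ : ℝ) ≤ N := Nat.le_ceil _
    have h2 : (N:ℝ) ≤ i := Nat.cast_le.mpr hi
    have h3 : B - δ/2 * ((i:ℝ)+1) ≤ 0 := by
      have h4 : 2*B/δ ≤ (i:ℝ)+1 := by linarith
      have h5 := (div_le_iff₀ hδ0).mp h4
      nlinarith
    exact max_eq_left h3
  have hsplit : (∑ i ∈ L, max 0 (B - δ/2 * ((i:ℝ)+1)))
      ≤ ∑ i ∈ Finset.range N, max 0 (B - δ/2 * ((i:ℝ)+1)) := by
    calc ∑ i ∈ L, max 0 (B - δ/2 * ((i:ℝ)+1))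
        = ∑ i ∈ L ∩ Finset.range N, max 0 (B - δ/2 * ((i:ℝ)+1)) := by
          refine (Finset.sum_subset Finset.inter_subset_left ?_).symm
          intro i hiL hiN
          exact hf0 i (fun hmem => hiN (Finset.mem_inter.mpr ⟨hiL, hmem⟩))
      _ ≤ ∑ i ∈ Finset.range N, max 0 (B - δ/2 * ((i:ℝ)+1)) := by
          apply Finset.sum_le_sum_of_subset_of_nonneg Finset.inter_subset_right
          intro i _ _; exact le_max_left _ _
  have hcard : ∑ i ∈ Finset.range N, max 0 (B - δ/2 * ((i:ℝ)+1)) ≤ (N:ℝ) * B := by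
    have hle : ∀ i ∈ Finset.range N, max 0 (B - δ/2 * ((i:ℝ)+1)) ≤ B := by
      intro i _
      apply max_le hB0.le
      nlinarith [Nat.cast_nonneg (α := ℝ) i]
    calc ∑ i ∈ Finset.range N, max 0 (B - δ/2 * ((i:ℝ)+1))
        ≤ (Finset.range N).card • B := Finset.sum_le_card_nsmul _ _ _ hle
      _ = (N:ℝ) * B := by rw [Finset.card_range, nsmul_eq_mul]
  have hNbound : (N:ℝ) ≤ 2*B/δ + 1 := le_of_lt (Nat.ceil_lt_add_one (by positivity))
  calc (∑ i ∈ L, max 0 (B - δ/2 * ((i:ℝ)+1))) ≤ _ := hsplit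
    _ ≤ (N:ℝ)*B := hcard
    _ ≤ (2*B/δ+1)*B := by nlinarith
    _ ≤ _ := hfin

private lemma step_bound (a β δ B : ℝ) (ha1 : 1 ≤ a) (hβ0 : 0 < β) (hδ0 : 0 < δ)
    (hβ3 : β ^ (3:ℕ) = 2*a/δ) (hB_def : B = Real.log 2 + 3 * a * β)
    (m c : ℝ) (hm1 : 1 ≤ m) (hc1 : 1 ≤ c) :
    1 + m ^ a * c ^ a ≤ Real.exp (δ * (m * c) + max 0 (B - δ/2 * m)) := by
  have hm0 : (0:ℝ) < m := lt_of_lt_of_le one_pos hm1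
  have hc0 : (0:ℝ) < c := lt_of_lt_of_le one_pos hc1
  have ha0 : (0:ℝ) < a := by linarith
  have ht1 : 1 ≤ m * c := by nlinarith
  have hti : m ≤ m * c := by nlinarith
  have hmul : m ^ a * c ^ a = (m*c) ^ a := (Real.mul_rpow hm0.le hc0.le).symm
  rw [hmul]
  have hfl := factor_le a (m*c) β ha1 ht1 hβ0
  have hb3 : a*(m*c)/β^3 = δ/2 * (m*c) := by
    rw [hβ3]; field_simp
  have harg : Real.log 2 + a*(m*c)/β^3 + 3*a*β ≤ δ * (m*c) + max 0 (B - δ/2*m) := by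
    have hmx : B - δ/2*m ≤ max 0 (B - δ/2*m) := le_max_right _ _
    have h3 : δ/2 * m ≤ δ/2 * (m*c) := by nlinarith
    rw [hb3]
    linarith
  exact hfl.trans (Real.exp_le_exp.mpr harg)

private lemma norm_exp_I_sub_one (θ : ℝ) :
    ‖Complex.exp ((θ:ℂ) * Complex.I) - 1‖ = 2 * |Real.sin (θ/2)| := by
  rw [Complex.exp_mul_I]
  have h1 : Complex.cos θ + Complex.sin θ * Complex.I - 1
      = ((Real.cos θ - 1 : ℝ) : ℂ) + ((Real.sin θ : ℝ) : ℂ) * Complex.I := by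
    push_cast [Complex.ofReal_cos, Complex.ofReal_sin]
    ring
  rw [h1, Complex.norm_add_mul_I]
  have h2 : (Real.cos θ - 1) ^ 2 + Real.sin θ ^ 2 = (2 * |Real.sin (θ/2)|) ^ 2 := by
    have hs := Real.sin_sq_eq_half_sub (θ/2)
    have h2θ : 2 * (θ/2) = θ := by ring
    rw [h2θ] at hs
    have hp := Real.sin_sq_add_cos_sq θ
    have habs : |Real.sin (θ/2)| ^ 2 = Real.sin (θ/2) ^ 2 := sq_abs _
    nlinarith
  rw [h2, Real.sqrt_sq (by positivity)]

private lemma sin_lower (x : ℝ) (hx : |x| ≤ 1/2) : 2 * |x| ≤ |Real.sin (Real.pi * x)| := by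
  have hπ := Real.pi_pos
  have h1 : |Real.sin (Real.pi * x)| = Real.sin (Real.pi * |x|) := by
    rcases le_or_gt 0 x with hx0 | hx0
    · rw [_root_.abs_of_nonneg hx0, _root_.abs_of_nonneg]
      apply Real.sin_nonneg_of_nonneg_of_le_pi
      · positivity
      · nlinarith [_root_.abs_of_nonneg hx0 ▸ hx]
    · have hxa : |x| = -x := abs_of_neg hx0
      rw [hxa]
      have hflip : Real.sin (Real.pi * x) = -Real.sin (Real.pi * -x) := by
        rw [← Real.sin_neg]; ring_nf
      rw [hflip, abs_neg, _root_.abs_of_nonneg]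
      apply Real.sin_nonneg_of_nonneg_of_le_pi
      · nlinarith
      · nlinarith [hxa ▸ hx]
  rw [h1]
  have h2 := Real.mul_le_sin (x := Real.pi * |x|) (by positivity) (by nlinarith)
  have hπ' : 2 / Real.pi * (Real.pi * |x|) = 2 * |x| := by field_simp
  linarith [hπ' ▸ h2]

/-- Small divisor lemma: under the Diophantine conditions on `ω` and `α`, for
`h ∈ AP_r(ω)` (given by its Fourier coefficients) with zero mean value and for
`r' < r` with `δ = r - r'` small enough, the difference equation
`s(x+α) − s(x) = h(x)` has a unique zero-mean solution `s ∈ AP_{r'}(ω)`, with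
`‖s‖_{r'} ≤ γ⁻¹ ‖h‖_r e^{δ^{-2}}`. -/
theorem stmt_12 (μ γ₀ γ : ℝ) (hμ : 0 < μ) (hγ₀ : 0 < γ₀) (hγ : 0 < γ)
    (ω : ℕ → ℝ) (hω : ∀ i, ω i ∈ Set.Icc (0:ℝ) 1)
    (hdio : ∀ l : ℕ →₀ ℤ, l ≠ 0 →
      |freq ω l| > γ₀ / ∏ i ∈ l.support,
        (1 + ((i : ℝ) + 1) ^ (1 + μ) * |(l i : ℝ)| ^ (1 + μ)))
    (α : ℝ)
    (hα : ∀ l : ℕ →₀ ℤ, l ≠ 0 → ∀ n : ℤ,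
      |freq ω l * α / (2 * Real.pi) - n| >
        γ * ∏ i ∈ l.support,
          (1 + ((i : ℝ) + 1) ^ (2 + 2 * μ) * |(l i : ℝ)| ^ (2 + 2 * μ))⁻¹)
    (r : ℝ) (hr : 0 < r) (h : (ℕ →₀ ℤ) → ℂ) (hmean : h 0 = 0)
    (hsum : Summable (fun l : ℕ →₀ ℤ => ‖h l‖ * Real.exp (r * wnorm l))) :
    ∃ δ₀ > (0:ℝ), ∀ r' : ℝ, 0 < r' → r' < r → r - r' < δ₀ →
      ∃ s : (ℕ →₀ ℤ) → ℂ,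
        (s 0 = 0 ∧
          Summable (fun l : ℕ →₀ ℤ => ‖s l‖ * Real.exp (r' * wnorm l)) ∧
          ∀ l : ℕ →₀ ℤ,
            s l * (Complex.exp (Complex.I * (freq ω l : ℂ) * (α : ℂ)) - 1) = h l) ∧
        (∑' l : ℕ →₀ ℤ, ‖s l‖ * Real.exp (r' * wnorm l)) ≤
          γ⁻¹ * (∑' l : ℕ →₀ ℤ, ‖h l‖ * Real.exp (r * wnorm l)) *
            Real.exp ((r - r') ^ (-2 : ℤ)) ∧
        ∀ s' : (ℕ →₀ ℤ) → ℂ,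
          (s' 0 = 0 ∧
            Summable (fun l : ℕ →₀ ℤ => ‖s' l‖ * Real.exp (r' * wnorm l)) ∧
            ∀ l : ℕ →₀ ℤ,
              s' l * (Complex.exp (Complex.I * (freq ω l : ℂ) * (α : ℂ)) - 1) = h l) →
          s' = s := by
  classical
  set a : ℝ := 2 + 2 * μ with ha_def
  clear_value a
  have ha1 : 1 ≤ a := by rw [ha_def]; linarith
  have ha0 : 0 < a := by linarith
  have h2a1 : (1:ℝ) ≤ 2 * a := by linarith
  set K : ℝ := Real.log 2 + 3 * a * (2*a) ^ ((1:ℝ)/3) with hK_def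
  clear_value K
  have hlog2 : (0:ℝ) ≤ Real.log 2 := Real.log_nonneg one_le_two
  have hcb1 : (1:ℝ) ≤ (2*a) ^ ((1:ℝ)/3) := Real.one_le_rpow h2a1 (by norm_num)
  have hK1 : 1 ≤ K := by rw [hK_def]; nlinarith
  have hK2pos : (0:ℝ) < 3 * K ^ 2 := by nlinarith
  refine ⟨min 1 ((1/(3*K^2))^3), lt_min one_pos (by positivity), ?_⟩
  intro r' hr'0 hr'r hδlt
  set δ : ℝ := r - r' with hδ_def
  clear_value δ
  have hδ0 : 0 < δ := by rw [hδ_def]; linarith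
  have hδ1 : δ ≤ 1 := le_of_lt (lt_of_lt_of_le hδlt (min_le_left _ _))
  have hδK : δ ≤ (1/(3*K^2))^3 := le_of_lt (lt_of_lt_of_le hδlt (min_le_right _ _))
  set η : ℝ := δ ^ ((1:ℝ)/3) with hη_def
  clear_value η
  have hη0 : 0 < η := hη_def ▸ Real.rpow_pos_of_pos hδ0 _
  have hη3 : η ^ (3:ℕ) = δ := by
    rw [hη_def, ← Real.rpow_natCast (δ ^ ((1:ℝ)/3)) 3, ← Real.rpow_mul hδ0.le]
    norm_num
  have hη1 : η ≤ 1 := by rw [hη_def]; exact Real.rpow_le_one hδ0.le hδ1 (by norm_num)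
  have hηK : η ≤ 1/(3*K^2) := by
    have h1 : η ≤ ((1/(3*K^2))^3) ^ ((1:ℝ)/3) := by
      rw [hη_def]; exact Real.rpow_le_rpow hδ0.le hδK (by norm_num)
    have h2 : (((1:ℝ)/(3*K^2))^(3:ℕ)) ^ ((1:ℝ)/3) = 1/(3*K^2) := by
      rw [← Real.rpow_natCast ((1:ℝ)/(3*K^2)) 3, ← Real.rpow_mul (by positivity)]
      norm_num
    calc η ≤ _ := h1
      _ = _ := h2
  set β : ℝ := (2*a/δ) ^ ((1:ℝ)/3) with hβ_def
  clear_value β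
  have h2aδ : 0 < 2*a/δ := by positivity
  have hβ0 : 0 < β := hβ_def ▸ Real.rpow_pos_of_pos h2aδ _
  have hβ3 : β ^ (3:ℕ) = 2*a/δ := by
    rw [hβ_def, ← Real.rpow_natCast ((2*a/δ) ^ ((1:ℝ)/3)) 3, ← Real.rpow_mul h2aδ.le]
    norm_num
  have hβη : β * η = (2*a) ^ ((1:ℝ)/3) := by
    rw [hβ_def, hη_def, ← Real.mul_rpow h2aδ.le hδ0.le]
    congr 1
    field_simp
  set B : ℝ := Real.log 2 + 3 * a * β with hB_def
  clear_value B
  have hB0 : 0 < B := by rw [hB_def]; nlinarith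
  have hBη : B * η ≤ K := by
    have he : B * η = Real.log 2 * η + 3 * a * (β * η) := by rw [hB_def]; ring
    rw [he, hβη, hK_def]
    nlinarith
  -- excess sum bound
  have hfin := final_arith K η δ B hK1 hη0 hη1 hηK hη3 hB0 hBη
  have hNB : ∀ L : Finset ℕ, (∑ i ∈ L, max 0 (B - δ/2 * ((i:ℝ)+1))) ≤ (δ^2)⁻¹ :=
    fun L => excess_sum δ B hδ0 hB0 hfin L
  -- product bound
  have hprodpos : ∀ l : ℕ →₀ ℤ,
      0 < ∏ i ∈ l.support, (1 + ((i:ℝ)+1)^a * |(l i:ℝ)|^a) :=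
    fun l => Finset.prod_pos (fun i _ => by positivity)
  have hprodbound : ∀ l : ℕ →₀ ℤ,
      (∏ i ∈ l.support, (1 + ((i:ℝ)+1)^a * |(l i : ℝ)|^a))
        ≤ Real.exp (δ * wnorm l + (δ^2)⁻¹) := by
    intro l
    have hstep : ∀ i ∈ l.support,
        1 + ((i:ℝ)+1)^a * |(l i : ℝ)|^a
          ≤ Real.exp (δ * (((i:ℝ)+1) * |(l i : ℝ)|) + max 0 (B - δ/2*((i:ℝ)+1))) := by
      intro i hi
      have hli : (1:ℝ) ≤ |(l i : ℝ)| := by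
        have h1 : l i ≠ 0 := Finsupp.mem_support_iff.mp hi
        have h2 : (1:ℤ) ≤ |l i| := Int.one_le_abs h1
        calc (1:ℝ) = ((1:ℤ):ℝ) := by norm_num
          _ ≤ ((|l i| : ℤ) : ℝ) := by exact_mod_cast h2
          _ = |(l i : ℝ)| := by push_cast; ring
      have hi1 : (1:ℝ) ≤ (i:ℝ)+1 := by
        have := Nat.cast_nonneg (α := ℝ) i
        linarith
      exact step_bound a β δ B ha1 hβ0 hδ0 hβ3 hB_def ((i:ℝ)+1) |(l i : ℝ)| hi1 hli
    calc (∏ i ∈ l.support, (1 + ((i:ℝ)+1)^a * |(l i : ℝ)|^a))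
        ≤ ∏ i ∈ l.support,
            Real.exp (δ * (((i:ℝ)+1) * |(l i : ℝ)|) + max 0 (B - δ/2*((i:ℝ)+1))) :=
          Finset.prod_le_prod (fun i _ => by positivity) hstep
      _ = Real.exp (∑ i ∈ l.support,
            (δ * (((i:ℝ)+1) * |(l i : ℝ)|) + max 0 (B - δ/2*((i:ℝ)+1)))) :=
          (Real.exp_sum _ _).symm
      _ ≤ Real.exp (δ * wnorm l + (δ^2)⁻¹) := by
          apply Real.exp_le_exp.mpr
          rw [Finset.sum_add_distrib]
          have h1 : ∑ i ∈ l.support, δ * (((i:ℝ)+1) * |(l i : ℝ)|) = δ * wnorm l := by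
            rw [wnorm, Finset.mul_sum]
          rw [h1]
          have h2 := hNB l.support
          linarith
  -- denominator bound
  have hdenom : ∀ l : ℕ →₀ ℤ, l ≠ 0 →
      γ * (∏ i ∈ l.support, (1 + ((i:ℝ)+1)^a * |(l i:ℝ)|^a))⁻¹
        < ‖Complex.exp (Complex.I * (freq ω l : ℂ) * (α:ℂ)) - 1‖ := by
    intro l hl
    have hαl := hα l hl (round (freq ω l * α / (2 * Real.pi)))
    rw [Finset.prod_inv_distrib] at hαl
    set θ : ℝ := freq ω l * α with hθ_def
    have hexp : Complex.I * (freq ω l : ℂ) * (α:ℂ) = (θ:ℂ) * Complex.I := by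
      rw [hθ_def]; push_cast; ring
    rw [hexp, norm_exp_I_sub_one θ]
    set x : ℝ := θ / (2*Real.pi) with hx_def
    have hπ := Real.pi_pos
    have hθ2 : θ/2 = Real.pi * x := by rw [hx_def]; field_simp
    set n : ℤ := round x with hn_def
    set d : ℝ := x - (n:ℝ) with hd_def
    have hd2 : |d| ≤ 1/2 := abs_sub_round x
    have hsin := sin_lower d hd2
    have hshift : |Real.sin (Real.pi * x)| = |Real.sin (Real.pi * d)| := by
      have hxd : Real.pi * x = Real.pi * d + (n:ℝ) * Real.pi := by rw [hd_def]; ring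
      rw [hxd, Real.sin_add_int_mul_pi, abs_mul]
      have hone : |((-1:ℝ)) ^ n| = 1 := by
        rcases Int.even_or_odd n with he | ho
        · rw [he.neg_one_zpow]; norm_num
        · rw [Odd.neg_one_zpow ho]; norm_num
      rw [hone, one_mul]
    rw [hθ2, hshift]
    have habs : γ * (∏ i ∈ l.support, (1 + ((i:ℝ)+1)^a * |(l i:ℝ)|^a))⁻¹ < |d| := hαl
    linarith [abs_nonneg d]
  set s : (ℕ →₀ ℤ) → ℂ := fun l => if l = 0 then 0
    else h l / (Complex.exp (Complex.I * (freq ω l : ℂ) * (α:ℂ)) - 1) with hs_def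
  have hs0 : s 0 = 0 := by rw [hs_def]; simp
  have hdpos : ∀ l : ℕ →₀ ℤ, l ≠ 0 →
      0 < γ * (∏ i ∈ l.support, (1 + ((i:ℝ)+1)^a * |(l i:ℝ)|^a))⁻¹ :=
    fun l _ => mul_pos hγ (inv_pos.mpr (hprodpos l))
  have hdne : ∀ l : ℕ →₀ ℤ, l ≠ 0 →
      Complex.exp (Complex.I * (freq ω l : ℂ) * (α:ℂ)) - 1 ≠ 0 := by
    intro l hl hzero
    have h1 := hdenom l hl
    rw [hzero, norm_zero] at h1
    exact absurd h1 (not_lt.mpr (hdpos l hl).le)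
  have heqn : ∀ l : ℕ →₀ ℤ,
      s l * (Complex.exp (Complex.I * (freq ω l : ℂ) * (α:ℂ)) - 1) = h l := by
    intro l
    by_cases hl : l = 0
    · subst hl
      rw [hs0, zero_mul, hmean]
    · rw [hs_def]
      simp only [if_neg hl]
      exact div_mul_cancel₀ _ (hdne l hl)
  have hnorm_s : ∀ l : ℕ →₀ ℤ, l ≠ 0 →
      ‖s l‖ ≤ γ⁻¹ * ‖h l‖ * (∏ i ∈ l.support, (1 + ((i:ℝ)+1)^a * |(l i:ℝ)|^a)) := by
    intro l hl
    have hd := hdenom l hl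
    have hP := hprodpos l
    have hpos := hdpos l hl
    rw [hs_def]
    simp only [if_neg hl, norm_div]
    calc ‖h l‖ / ‖Complex.exp (Complex.I * (freq ω l : ℂ) * (α:ℂ)) - 1‖
        ≤ ‖h l‖ / (γ * (∏ i ∈ l.support, (1 + ((i:ℝ)+1)^a * |(l i:ℝ)|^a))⁻¹) :=
          div_le_div_of_nonneg_left (norm_nonneg _) hpos hd.le
      _ = γ⁻¹ * ‖h l‖ * (∏ i ∈ l.support, (1 + ((i:ℝ)+1)^a * |(l i:ℝ)|^a)) := by
          rw [div_eq_mul_inv, mul_inv, inv_inv]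
          ring
  have hkey : ∀ l : ℕ →₀ ℤ, ‖s l‖ * Real.exp (r' * wnorm l)
      ≤ γ⁻¹ * (‖h l‖ * Real.exp (r * wnorm l)) * Real.exp ((δ^2)⁻¹) := by
    intro l
    by_cases hl : l = 0
    · subst hl
      rw [hs0, norm_zero, zero_mul]
      positivity
    · have h1 := hnorm_s l hl
      have h2 := hprodbound l
      have hP := hprodpos l
      calc ‖s l‖ * Real.exp (r' * wnorm l)
          ≤ (γ⁻¹ * ‖h l‖ * (∏ i ∈ l.support, (1 + ((i:ℝ)+1)^a * |(l i:ℝ)|^a)))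
              * Real.exp (r' * wnorm l) :=
            mul_le_mul_of_nonneg_right h1 (Real.exp_nonneg _)
        _ ≤ (γ⁻¹ * ‖h l‖ * Real.exp (δ * wnorm l + (δ^2)⁻¹)) * Real.exp (r' * wnorm l) := by
            have h3 : γ⁻¹ * ‖h l‖ * (∏ i ∈ l.support, (1 + ((i:ℝ)+1)^a * |(l i:ℝ)|^a))
                ≤ γ⁻¹ * ‖h l‖ * Real.exp (δ * wnorm l + (δ^2)⁻¹) :=
              mul_le_mul_of_nonneg_left h2 (by positivity)
            exact mul_le_mul_of_nonneg_right h3 (Real.exp_nonneg _)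
        _ = γ⁻¹ * (‖h l‖ * Real.exp (r * wnorm l)) * Real.exp ((δ^2)⁻¹) := by
            have hww : δ * wnorm l + (δ^2)⁻¹ + r' * wnorm l
                = r * wnorm l + (δ^2)⁻¹ := by rw [hδ_def]; ring
            rw [mul_assoc (γ⁻¹ * ‖h l‖), ← Real.exp_add, hww, Real.exp_add, ← mul_assoc]
            ring
  have hsummable : Summable (fun l : ℕ →₀ ℤ => ‖s l‖ * Real.exp (r' * wnorm l)) :=
    Summable.of_nonneg_of_le (fun l => by positivity) hkey
      ((hsum.mul_left γ⁻¹).mul_right _)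
  refine ⟨s, ⟨hs0, hsummable, heqn⟩, ?_, ?_⟩
  · have hz : δ ^ (-2:ℤ) = (δ^2)⁻¹ := by
      rw [show ((-2:ℤ)) = -((2:ℕ):ℤ) by norm_num, zpow_neg, zpow_natCast]
    calc (∑' l : ℕ →₀ ℤ, ‖s l‖ * Real.exp (r' * wnorm l))
        ≤ ∑' l : ℕ →₀ ℤ, γ⁻¹ * (‖h l‖ * Real.exp (r * wnorm l)) * Real.exp ((δ^2)⁻¹) :=
          Summable.tsum_le_tsum hkey hsummable ((hsum.mul_left γ⁻¹).mul_right _)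
      _ = γ⁻¹ * (∑' l : ℕ →₀ ℤ, ‖h l‖ * Real.exp (r * wnorm l)) * Real.exp ((δ^2)⁻¹) := by
          rw [tsum_mul_right, tsum_mul_left]
      _ = γ⁻¹ * (∑' l : ℕ →₀ ℤ, ‖h l‖ * Real.exp (r * wnorm l)) * Real.exp (δ ^ (-2:ℤ)) := by
          rw [hz]
  · rintro s' ⟨h0', _, heq'⟩
    funext l
    by_cases hl : l = 0
    · rw [hl, h0', hs0]
    · exact mul_right_cancel₀ (hdne l hl) ((heq' l).trans (heqn l).symm)
end

section
/- For any small δ > 0 and μ > 0: sup over nonzero finitely supported integer vectors l of ∏_{i=1}^∞ (1 + |l_i|^{2+μ} i^{2+2μ}) e^{-δ‖l‖} ≤ e^{Cδ^{-2}}, where ‖l‖ = Σᵢ i|lᵢ| and C is a constant depending only on μ. -/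
set_option maxHeartbeats 1000000 in
/-- For small `δ > 0`, uniformly over nonzero finitely supported integer
vectors `l`, `∏ᵢ (1 + |lᵢ|^{2+μ} i^{2+2μ}) e^{-δ‖l‖} ≤ e^{C/δ²}` for a constant
`C` depending only on `μ`. -/
theorem stmt_13 (μ : ℝ) (hμ : 0 < μ) :
    ∃ C > (0:ℝ), ∃ δ₀ > (0:ℝ), ∀ δ : ℝ, 0 < δ → δ < δ₀ →
      ∀ l : ℕ →₀ ℤ, l ≠ 0 →
        (∏ i ∈ l.support, (1 + |(l i : ℝ)| ^ (2 + μ) * ((i : ℝ) + 1) ^ (2 + 2 * μ))) *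
            Real.exp (-δ * wnorm l) ≤ Real.exp (C / δ ^ 2) := by
  obtain ⟨A, hAdef⟩ : ∃ a : ℝ, a = 2 + 2 * μ := ⟨_, rfl⟩
  have hA2 : (2:ℝ) ≤ A := by rw [hAdef]; linarith
  have hApos : (0:ℝ) < A := by linarith
  obtain ⟨B, hBdef⟩ : ∃ b : ℝ, b = A + 2 * A * Real.sqrt (2 * A) := ⟨_, rfl⟩
  have hBpos : 0 < B := by rw [hBdef]; positivity
  refine ⟨3 * B ^ 2, by positivity, 1, one_pos, ?_⟩
  intro δ hδ hδ1 l _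
  have hlog2 : Real.log 2 ≤ 1 := by
    have := Real.log_le_sub_one_of_pos (by norm_num : (0:ℝ) < 2); linarith
  have h2Aδpos : 0 < 2 * A / δ := by positivity
  have h2Aδ1 : 1 ≤ 2 * A / δ := by
    rw [le_div_iff₀ hδ]; nlinarith
  have hlogA : 0 ≤ Real.log (2 * A / δ) := Real.log_nonneg h2Aδ1
  obtain ⟨K, hKdef⟩ : ∃ k : ℝ, k = A * (1 + Real.log (2 * A / δ)) := ⟨_, rfl⟩
  have hK2 : 2 ≤ K := by rw [hKdef]; nlinarith [mul_nonneg hApos.le hlogA]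
  have hKpos : 0 < K := by linarith
  -- K ≤ B / √δ
  have hsqrtδpos : 0 < Real.sqrt δ := Real.sqrt_pos.2 hδ
  have hsqrtδ1 : Real.sqrt δ ≤ 1 := by
    rw [show (1:ℝ) = Real.sqrt 1 by simp]
    exact Real.sqrt_le_sqrt hδ1.le
  have hKB : K ≤ B / Real.sqrt δ := by
    have hlog_le : Real.log (2 * A / δ) ≤ 2 * Real.sqrt (2 * A / δ) := by
      have h1 := Real.log_le_sub_one_of_pos (Real.sqrt_pos.2 h2Aδpos)
      have h2 := Real.log_sqrt h2Aδpos.le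
      linarith
    have hsq : Real.sqrt (2 * A / δ) = Real.sqrt (2 * A) / Real.sqrt δ :=
      Real.sqrt_div (by positivity) δ
    have hsA : 0 ≤ Real.sqrt (2 * A) := Real.sqrt_nonneg _
    have hA_le : A ≤ A / Real.sqrt δ := by
      rw [le_div_iff₀ hsqrtδpos]; nlinarith
    have : A * Real.log (2 * A / δ) ≤ 2 * A * Real.sqrt (2 * A) / Real.sqrt δ := by
      rw [hsq] at hlog_le
      calc A * Real.log (2 * A / δ) ≤ A * (2 * (Real.sqrt (2 * A) / Real.sqrt δ)) :=
            mul_le_mul_of_nonneg_left hlog_le hApos.le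
        _ = 2 * A * Real.sqrt (2 * A) / Real.sqrt δ := by ring
    rw [hKdef, hBdef, add_div]
    calc A * (1 + Real.log (2 * A / δ)) = A + A * Real.log (2 * A / δ) := by ring
      _ ≤ A / Real.sqrt δ + 2 * A * Real.sqrt (2 * A) / Real.sqrt δ := add_le_add hA_le this
  obtain ⟨N, hNdef⟩ : ∃ nn : ℕ, nn = ⌈2 * K / δ⌉₊ := ⟨_, rfl⟩
  have hNge : 2 * K / δ ≤ (N : ℝ) := by rw [hNdef]; exact Nat.le_ceil _
  have hNle : (N : ℝ) ≤ 2 * K / δ + 1 := by rw [hNdef]; exact (Nat.ceil_lt_add_one (by positivity)).le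
  -- per-term bound
  have hterm : ∀ i ∈ l.support,
      1 + |(l i : ℝ)| ^ (2 + μ) * ((i : ℝ) + 1) ^ (2 + 2 * μ) ≤
        Real.exp (δ * (((i : ℝ) + 1) * |(l i : ℝ)|) + (if i < N then K else 0)) := by
    intro i hi
    have hli : l i ≠ 0 := Finsupp.mem_support_iff.mp hi
    have hm : (1:ℝ) ≤ |(l i : ℝ)| := by
      have : (1:ℤ) ≤ |l i| := Int.one_le_abs hli
      calc (1:ℝ) = ((1:ℤ):ℝ) := by norm_num
        _ ≤ ((|l i|:ℤ):ℝ) := by exact_mod_cast this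
        _ = |(l i : ℝ)| := by push_cast; ring
    obtain ⟨m, hmdef⟩ : ∃ x : ℝ, x = |(l i : ℝ)| := ⟨_, rfl⟩
    rw [← hmdef] at hm ⊢
    obtain ⟨n, hndef⟩ : ∃ x : ℝ, x = (i : ℝ) + 1 := ⟨_, rfl⟩
    rw [← hndef]
    have hn : (1:ℝ) ≤ n := by
      rw [hndef]; have : (0:ℝ) ≤ (i:ℝ) := Nat.cast_nonneg i; linarith
    have hmpos : (0:ℝ) < m := by linarith
    have hnpos : (0:ℝ) < n := by linarith
    obtain ⟨t, htdef⟩ : ∃ x : ℝ, x = n * m := ⟨_, rfl⟩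
    have ht1 : (1:ℝ) ≤ t := by rw [htdef]; exact one_le_mul_of_one_le_of_one_le hn hm
    have htpos : (0:ℝ) < t := by linarith
    -- 1 + m^(2+μ) n^A ≤ 2 t^A
    have hx1 : (1:ℝ) ≤ m ^ (2 + μ) * n ^ (2 + 2 * μ) :=
      one_le_mul_of_one_le_of_one_le (Real.one_le_rpow hm (by linarith))
        (Real.one_le_rpow hn (by linarith))
    have hxle : m ^ (2 + μ) * n ^ (2 + 2 * μ) ≤ t ^ A := by
      rw [htdef, Real.mul_rpow hnpos.le hmpos.le, hAdef]
      rw [mul_comm (n ^ (2 + 2 * μ))]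
      exact mul_le_mul_of_nonneg_right
        (Real.rpow_le_rpow_of_exponent_le hm (by linarith))
        (by positivity)
    have hfact : 1 + m ^ (2 + μ) * n ^ (2 + 2 * μ) ≤ 2 * t ^ A := by
      have : (1:ℝ) ≤ t ^ A := Real.one_le_rpow ht1 hApos.le
      linarith
    have h2tA : (0:ℝ) < 2 * t ^ A := by positivity
    have hlog1 : Real.log (1 + m ^ (2 + μ) * n ^ (2 + 2 * μ)) ≤ Real.log 2 + A * Real.log t := by
      calc Real.log (1 + m ^ (2 + μ) * n ^ (2 + 2 * μ)) ≤ Real.log (2 * t ^ A) :=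
            Real.log_le_log (by linarith) hfact
        _ = Real.log 2 + A * Real.log t := by
            rw [Real.log_mul (by norm_num) (by positivity), Real.log_rpow htpos]
    -- main: log2 + A log t ≤ δ t / 2 + log 2 - A + A log(2A/δ)
    have hmain : Real.log 2 + A * Real.log t ≤
        δ * t / 2 + Real.log 2 - A + A * Real.log (2 * A / δ) := by
      obtain ⟨u, hudef⟩ : ∃ x : ℝ, x = t * δ / (2 * A) := ⟨_, rfl⟩
      have hupos : 0 < u := by rw [hudef]; positivity
      have hu1 : Real.log u ≤ u - 1 := Real.log_le_sub_one_of_pos hupos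
      have ht_eq : t = u * (2 * A / δ) := by
        rw [hudef]; field_simp
      have hlogt : Real.log t = Real.log u + Real.log (2 * A / δ) := by
        rw [ht_eq, Real.log_mul (ne_of_gt hupos) (ne_of_gt h2Aδpos)]
      have hAu : A * u = t * δ / 2 := by
        rw [hudef]; field_simp
      have : A * Real.log t ≤ A * (u - 1) + A * Real.log (2 * A / δ) := by
        rw [hlogt, mul_add]
        exact add_le_add (mul_le_mul_of_nonneg_left hu1 hApos.le) le_rfl
      have hAum : A * (u - 1) = A * u - A := by ring
      linarith [this, hAu, hAum]
    have hexp : Real.log 2 + A * Real.log t ≤ δ * t + (if i < N then K else 0) := by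
      by_cases hiN : i < N
      · simp only [hiN, if_true]
        have hδt0 : (0:ℝ) ≤ δ * t := by positivity
        rw [hKdef]; linarith
      · simp only [hiN, if_false]
        have hiN' : (N : ℝ) ≤ (i : ℝ) := by exact_mod_cast Nat.not_lt.mp hiN
        have hnN : 2 * K / δ ≤ n := by rw [hndef]; linarith
        have hδt : 2 * K ≤ δ * t := by
          have h1 : 2 * K ≤ δ * n := by
            rw [div_le_iff₀ hδ] at hnN; linarith [hnN]
          have h2 : δ * n ≤ δ * t := by
            have hnt : n ≤ t := by rw [htdef]; exact le_mul_of_one_le_right hnpos.le hm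
            exact mul_le_mul_of_nonneg_left hnt hδ.le
          linarith
        rw [hKdef] at hδt
        have hAL : 0 ≤ A * Real.log (2 * A / δ) := mul_nonneg hApos.le hlogA
        nlinarith [hδt, hmain, hlog2, hA2, hAL]
    calc 1 + m ^ (2 + μ) * n ^ (2 + 2 * μ)
        = Real.exp (Real.log (1 + m ^ (2 + μ) * n ^ (2 + 2 * μ))) := by
          rw [Real.exp_log (by linarith)]
      _ ≤ Real.exp (δ * t + (if i < N then K else 0)) :=
          Real.exp_le_exp.mpr (le_trans hlog1 hexp)
      _ = Real.exp (δ * (n * m) + (if i < N then K else 0)) := by rw [htdef]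
  -- product bound
  have hprod : (∏ i ∈ l.support, (1 + |(l i : ℝ)| ^ (2 + μ) * ((i : ℝ) + 1) ^ (2 + 2 * μ))) ≤
      Real.exp (δ * wnorm l + ∑ i ∈ l.support, (if i < N then K else 0)) := by
    calc (∏ i ∈ l.support, (1 + |(l i : ℝ)| ^ (2 + μ) * ((i : ℝ) + 1) ^ (2 + 2 * μ)))
        ≤ ∏ i ∈ l.support,
            Real.exp (δ * (((i : ℝ) + 1) * |(l i : ℝ)|) + (if i < N then K else 0)) := by
          apply Finset.prod_le_prod
          · intro i hi; positivity
          · exact hterm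
      _ = Real.exp (∑ i ∈ l.support,
            (δ * (((i : ℝ) + 1) * |(l i : ℝ)|) + (if i < N then K else 0))) :=
          (Real.exp_sum _ _).symm
      _ = Real.exp (δ * wnorm l + ∑ i ∈ l.support, (if i < N then K else 0)) := by
          rw [Finset.sum_add_distrib, ← Finset.mul_sum, wnorm]
  -- sum of cutoffs bound
  have hsum : (∑ i ∈ l.support, (if i < N then K else 0)) ≤ 3 * B ^ 2 / δ ^ 2 := by
    have h1 : (∑ i ∈ l.support, (if i < N then K else 0)) =
        ((l.support.filter (fun i => i < N)).card : ℝ) * K := by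
      rw [← Finset.sum_filter, Finset.sum_const, nsmul_eq_mul]
    have h2 : (l.support.filter (fun i => i < N)) ⊆ Finset.range N := by
      intro i hi
      rw [Finset.mem_range]
      exact (Finset.mem_filter.mp hi).2
    have h3 : ((l.support.filter (fun i => i < N)).card : ℝ) ≤ (N : ℝ) := by
      have := Finset.card_le_card h2
      rw [Finset.card_range] at this
      exact_mod_cast this
    have h4 : ((l.support.filter (fun i => i < N)).card : ℝ) * K ≤ (2 * K / δ + 1) * K := by
      apply mul_le_mul_of_nonneg_right _ hKpos.le
      linarith
    have hKδ : K ≤ K ^ 2 / δ := by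
      rw [le_div_iff₀ hδ]; nlinarith
    have h5 : (2 * K / δ + 1) * K ≤ 3 * K ^ 2 / δ := by
      have : (2 * K / δ + 1) * K = 2 * K ^ 2 / δ + K := by field_simp
      rw [this]
      have : 2 * K ^ 2 / δ + K ≤ 2 * K ^ 2 / δ + K ^ 2 / δ := by linarith
      calc 2 * K ^ 2 / δ + K ≤ 2 * K ^ 2 / δ + K ^ 2 / δ := this
        _ = 3 * K ^ 2 / δ := by ring
    have hK2B : K ^ 2 ≤ B ^ 2 / δ := by
      have := mul_le_mul hKB hKB hKpos.le (by positivity)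
      calc K ^ 2 = K * K := sq K
        _ ≤ (B / Real.sqrt δ) * (B / Real.sqrt δ) := this
        _ = B ^ 2 / (Real.sqrt δ * Real.sqrt δ) := by rw [div_mul_div_comm, ← sq]
        _ = B ^ 2 / δ := by rw [Real.mul_self_sqrt hδ.le]
    have h6 : 3 * K ^ 2 / δ ≤ 3 * B ^ 2 / δ ^ 2 := by
      have h7 : 3 * K ^ 2 ≤ 3 * B ^ 2 / δ := by
        have h := mul_le_mul_of_nonneg_left hK2B (by norm_num : (0:ℝ) ≤ 3)
        calc 3 * K ^ 2 = 3 * (K ^ 2) := by ring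
          _ ≤ 3 * (B ^ 2 / δ) := h
          _ = 3 * B ^ 2 / δ := by ring
      calc 3 * K ^ 2 / δ ≤ (3 * B ^ 2 / δ) / δ := by gcongr
        _ = 3 * B ^ 2 / δ ^ 2 := by rw [div_div, sq δ]
    linarith
  calc (∏ i ∈ l.support, (1 + |(l i : ℝ)| ^ (2 + μ) * ((i : ℝ) + 1) ^ (2 + 2 * μ))) *
        Real.exp (-δ * wnorm l)
      ≤ Real.exp (δ * wnorm l + ∑ i ∈ l.support, (if i < N then K else 0)) *
        Real.exp (-δ * wnorm l) :=
        mul_le_mul_of_nonneg_right hprod (Real.exp_nonneg _)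
    _ = Real.exp (∑ i ∈ l.support, (if i < N then K else 0)) := by
        rw [← Real.exp_add]; congr 1; ring
    _ ≤ Real.exp (3 * B ^ 2 / δ ^ 2) := Real.exp_le_exp.mpr hsum
end
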